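/- arXiv:2210.10099 — 5 statements merged into one kernel-verified Lean document; each statement's English description precedes it below -/
import Mathlib

section
/- Define w(x,y) = (x² − y²) ln(−ln(x² + y²)) for 0 < x² + y² ≤ 1/4 and w(0,0) = 0. Then w is not twice differentiable at the origin. -/
/-! Along the first axis, w(t, 0) = t² log(-log t²). A second-order Taylor expansion at the
origin would make the symmetric second difference (w(t, 0) + w(-t, 0) - 2 w(0, 0)) / t² converge
to a finite limit, but here it equals 2 log(-log t²), which tends to +∞. -/

open Filter Topology Metric Set

noncomputable def pd {n : ℕ} (i : Fin n) (f : EuclideanSpace ℝ (Fin n) → ℝ)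
    (x : EuclideanSpace ℝ (Fin n)) : ℝ :=
  fderiv ℝ f x (EuclideanSpace.single i 1)

noncomputable def spd {n : ℕ} (i j : Fin n) (f : EuclideanSpace ℝ (Fin n) → ℝ)
    (x : EuclideanSpace ℝ (Fin n)) : ℝ :=
  pd i (pd j f) x

noncomputable def lap {n : ℕ} (f : EuclideanSpace ℝ (Fin n) → ℝ)
    (x : EuclideanSpace ℝ (Fin n)) : ℝ :=
  ∑ i, spd i i f x

def TwiceDiffAt {n : ℕ} (f : EuclideanSpace ℝ (Fin n) → ℝ)
    (p : EuclideanSpace ℝ (Fin n)) : Prop :=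
  (∀ᶠ x in 𝓝 p, DifferentiableAt ℝ f x) ∧
  DifferentiableAt ℝ (fderiv ℝ f) p ∧
  Tendsto (fun x => (f x - f p - fderiv ℝ f p (x - p)
      - (1/2) * fderiv ℝ (fderiv ℝ f) p (x - p) (x - p)) / ‖x - p‖^2)
    (𝓝[≠] p) (𝓝 0)

open scoped Classical in
noncomputable def wFun (x : EuclideanSpace ℝ (Fin 2)) : ℝ :=
  if x = 0 then 0
  else ((x 0)^2 - (x 1)^2) * Real.log (-Real.log ((x 0)^2 + (x 1)^2))

section
variable {E : Type*} [NormedAddCommGroup E] [NormedSpace ℝ E]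

lemma tendsto_smul_right_nhdsNE {v : E} (hv : v ≠ 0) :
    Tendsto (fun t : ℝ => t • v) (𝓝[≠] 0) (𝓝[≠] 0) := by
  have hc : Continuous fun t : ℝ => t • v := by fun_prop
  simpa using (hc.continuousWithinAt (x := 0) (s := {0}ᶜ)).tendsto_nhdsWithin
    (t := {(0 : E)}ᶜ) fun t ht => smul_ne_zero ht hv

theorem tendsto_second_difference_quotient {f : E → ℝ} {L : E →L[ℝ] ℝ}
    {B : E →L[ℝ] E →L[ℝ] ℝ}
    (h : Tendsto (fun x => (f x - f 0 - L x - (1/2) * B x x) / ‖x‖ ^ 2) (𝓝[≠] 0) (𝓝 0))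
    {v : E} (hv : v ≠ 0) :
    Tendsto (fun t : ℝ => (f (t • v) + f (-t • v) - 2 * f 0) / t ^ 2) (𝓝[≠] 0)
      (𝓝 (B v v)) := by
  have hv' : -v ≠ 0 := neg_ne_zero.2 hv
  have hlim := (((h.comp (tendsto_smul_right_nhdsNE hv)).add
    (h.comp (tendsto_smul_right_nhdsNE hv'))).mul_const (‖v‖ ^ 2)).add_const (B v v)
  rw [zero_add, zero_mul, zero_add] at hlim
  refine hlim.congr' ?_
  filter_upwards [self_mem_nhdsWithin] with t (ht : t ≠ 0)
  have hv2 : ‖v‖ ^ 2 ≠ 0 := by positivity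
  simp only [Function.comp_apply, norm_smul, map_smul, map_neg, smul_apply, neg_smul, smul_neg,
    neg_apply, smul_eq_mul, Real.norm_eq_abs, norm_neg, mul_pow, sq_abs]
  field_simp
  ring
end

lemma wFun_smul_single_zero (t : ℝ) :
    wFun (t • EuclideanSpace.single 0 1) = t ^ 2 * Real.log (-Real.log (t ^ 2)) := by
  by_cases ht : t = 0
  · simp [ht, wFun]
  · have hne : t • EuclideanSpace.single (0 : Fin 2) (1 : ℝ) ≠ 0 := by simp [ht]
    simp [wFun, hne]

lemma tendsto_log_neg_log_sq_atTop :
    Tendsto (fun t : ℝ => Real.log (-Real.log (t ^ 2))) (𝓝[≠] 0) atTop := by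
  have h : Tendsto (fun t : ℝ => Real.log (t ^ 2)) (𝓝[≠] 0) atBot := by
    simpa only [Real.log_pow] using
      Real.tendsto_log_nhdsNE_zero.const_mul_atBot (by norm_num : (0 : ℝ) < (2 : ℕ))
  exact Real.tendsto_log_atTop.comp (tendsto_neg_atBot_atTop.comp h)

theorem stmt3 : ¬ TwiceDiffAt wFun 0 := by
  rintro ⟨-, -, htaylor⟩
  simp only [sub_zero] at htaylor
  have he : EuclideanSpace.single (0 : Fin 2) (1 : ℝ) ≠ 0 := by simp
  have hfinite := tendsto_second_difference_quotient htaylor he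
  have hinfinite : Tendsto (fun t : ℝ => (wFun (t • EuclideanSpace.single 0 1)
      + wFun (-t • EuclideanSpace.single 0 1) - 2 * wFun 0) / t ^ 2) (𝓝[≠] 0) atTop := by
    refine (tendsto_log_neg_log_sq_atTop.const_mul_atTop two_pos).congr' ?_
    filter_upwards [self_mem_nhdsWithin] with t (ht : t ≠ 0)
    have hw0 : wFun 0 = 0 := by simp [wFun]
    rw [wFun_smul_single_zero, wFun_smul_single_zero, hw0, neg_sq]
    field_simp
    ring
  exact not_tendsto_nhds_of_tendsto_atTop hinfinite _ hfinite
end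

section
/- Let ψ: [0,∞) → ℝ be twice differentiable on (0,∞) with lim_{s→0⁺} ψ(s) = 0 and lim_{s→0⁺} ψ'(s) = 0, and define ω: ℝⁿ → ℝ by ω(x) = ψ(|x|) for x ≠ 0 and ω(0) = 0. Then ω is twice differentiable at the origin if and only if lim_{s→0⁺} ψ'(s)/s exists and is finite. -/
open Filter Topology Metric Set

/-!
Away from the origin `ω = ψ ∘ ‖·‖` has derivative `(ψ'(‖x‖) / ‖x‖) ⟪x, ·⟫`, and l'Hôpital turns
`ψ' → 0` into `ψ(s) / s → 0`, so `ω` is differentiable at `0` with derivative `0`; the formula for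
`Dω` thus holds everywhere. If `ψ'(s) / s → L`, then `Dω` is differentiable at `0` with derivative
`L ⟪·, ·⟫`, and l'Hôpital once more gives `ψ(s) / s² → L / 2`, which is the second-order Taylor
expansion of `ω` at `0`. Conversely, along a unit vector `e` one has `Dω(s e) e = ψ'(s)`, so
`ψ'(s) / s` is a difference quotient of `Dω` at `0` and tends to `D²ω(0) e e`.
-/

theorem tendsto_div_pow_succ_of_tendsto_deriv {ψ : ℝ → ℝ} {L : ℝ} (k : ℕ)
    (hψ : ∀ᶠ s in 𝓝[>] 0, DifferentiableAt ℝ ψ s) (hψ0 : Tendsto ψ (𝓝[>] 0) (𝓝 0))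
    (h : Tendsto (fun s => deriv ψ s / ((k + 1) * s ^ k)) (𝓝[>] 0) (𝓝 L)) :
    Tendsto (fun s => ψ s / s ^ (k + 1)) (𝓝[>] 0) (𝓝 L) := by
  have hderiv (s : ℝ) : deriv (fun s : ℝ => s ^ (k + 1)) s = (k + 1) * s ^ k := by
    simp
  refine deriv.lhopital_zero_nhdsGT hψ ?_ hψ0 ?_ (by simpa only [hderiv] using h)
  · filter_upwards [self_mem_nhdsWithin] with s (hs : 0 < s)
    rw [hderiv]
    positivity
  · exact ((continuous_pow (k + 1)).tendsto' 0 0 (zero_pow k.succ_ne_zero)).mono_left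
      nhdsWithin_le_nhds

theorem Asymptotics.isLittleO_id_nhds_zero_of_tendsto_norm_div
    {E F : Type*} [NormedAddCommGroup E] [NormedAddCommGroup F] {f : E → F} (hf0 : f 0 = 0)
    (h : Tendsto (fun x => ‖f x‖ / ‖x‖) (𝓝[≠] 0) (𝓝 0)) : f =o[𝓝 0] id := by
  have hne : f =o[𝓝[≠] 0] id := by
    rw [← Asymptotics.isLittleO_norm_norm]
    exact Asymptotics.isLittleO_of_tendsto (fun x hx => by simp_all) h
  rw [← nhdsNE_sup_pure]
  exact hne.sup (Asymptotics.isLittleO_pure.2 hf0)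

theorem hasFDerivAt_norm_of_ne_zero {E : Type*} [NormedAddCommGroup E] [InnerProductSpace ℝ E]
    {x : E} (hx : x ≠ 0) : HasFDerivAt (‖·‖) (‖x‖⁻¹ • innerSL ℝ x) x := by
  have hsqrt : HasDerivAt Real.sqrt (1 / (2 * ‖x‖)) (‖x‖ ^ 2) := by
    simpa using Real.hasDerivAt_sqrt (pow_ne_zero 2 (norm_ne_zero_iff.2 hx))
  have h := hsqrt.comp_hasFDerivAt x (hasStrictFDerivAt_norm_sq x).hasFDerivAt
  simp only [Function.comp_def, Real.sqrt_sq (norm_nonneg _)] at h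
  refine h.congr_fderiv ?_
  rw [← Nat.cast_smul_eq_nsmul ℝ, smul_smul]
  congr 1
  field_simp
  norm_num

section Radial

variable {E : Type*} [NormedAddCommGroup E] {ψ : ℝ → ℝ}

open scoped Classical in
noncomputable def radial (ψ : ℝ → ℝ) (x : E) : ℝ := if x = 0 then 0 else ψ ‖x‖

@[simp]
theorem radial_zero : radial ψ (0 : E) = 0 := by
  simp [radial]

theorem tendsto_radial_div_norm_sq {l : ℝ} (hψ : Tendsto (fun s => ψ s / s ^ 2) (𝓝[>] 0) (𝓝 l)) :
    Tendsto (fun x : E => radial ψ x / ‖x‖ ^ 2) (𝓝[≠] 0) (𝓝 l) := by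
  refine (hψ.comp (tendsto_norm_nhdsNE_zero (E := E))).congr' ?_
  filter_upwards [self_mem_nhdsWithin] with x (hx : x ≠ 0)
  simp [radial, hx]

theorem hasFDerivAt_radial_zero [NormedSpace ℝ E]
    (hψ : Tendsto (fun s => ψ s / s) (𝓝[>] 0) (𝓝 0)) :
    HasFDerivAt (radial ψ) (0 : E →L[ℝ] ℝ) 0 := by
  rw [hasFDerivAt_iff_isLittleO_nhds_zero]
  refine Asymptotics.isLittleO_id_nhds_zero_of_tendsto_norm_div (by simp) ?_
  refine ((tendsto_zero_iff_norm_tendsto_zero.1 hψ).comp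
    (tendsto_norm_nhdsNE_zero (E := E))).congr' ?_
  filter_upwards [self_mem_nhdsWithin] with x (hx : x ≠ 0)
  simp [radial, hx]

variable [InnerProductSpace ℝ E]

noncomputable def radialGrad (ψ : ℝ → ℝ) (x : E) : E →L[ℝ] ℝ :=
  (deriv ψ ‖x‖ / ‖x‖) • innerSL ℝ x

@[simp]
theorem radialGrad_zero : radialGrad ψ (0 : E) = 0 := by
  simp [radialGrad]

theorem hasFDerivAt_radial_of_ne_zero {x : E} (hx : x ≠ 0) (hψ : DifferentiableAt ℝ ψ ‖x‖) :
    HasFDerivAt (radial ψ) (radialGrad ψ x) x := by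
  have hcomp := hψ.hasDerivAt.comp_hasFDerivAt x (hasFDerivAt_norm_of_ne_zero hx)
  have heq : radial ψ =ᶠ[𝓝 x] fun y => ψ ‖y‖ := by
    filter_upwards [eventually_ne_nhds hx] with y hy
    simp [radial, hy]
  refine (hcomp.congr_of_eventuallyEq heq).congr_fderiv ?_
  rw [radialGrad, smul_smul, div_eq_mul_inv]

theorem fderiv_radial (hψ : ∀ s ∈ Ioi (0 : ℝ), DifferentiableAt ℝ ψ s)
    (hψ0 : Tendsto (fun s => ψ s / s) (𝓝[>] 0) (𝓝 0)) :
    fderiv ℝ (radial ψ) = radialGrad (E := E) ψ := by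
  ext1 x
  rcases eq_or_ne x 0 with rfl | hx
  · rw [(hasFDerivAt_radial_zero hψ0).fderiv, radialGrad_zero]
  · exact (hasFDerivAt_radial_of_ne_zero hx (hψ _ (norm_pos_iff.2 hx))).fderiv

theorem differentiable_radial (hψ : ∀ s ∈ Ioi (0 : ℝ), DifferentiableAt ℝ ψ s)
    (hψ0 : Tendsto (fun s => ψ s / s) (𝓝[>] 0) (𝓝 0)) :
    Differentiable ℝ (radial (E := E) ψ) := by
  intro x
  rcases eq_or_ne x 0 with rfl | hx
  · exact (hasFDerivAt_radial_zero hψ0).differentiableAt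
  · exact (hasFDerivAt_radial_of_ne_zero hx (hψ _ (norm_pos_iff.2 hx))).differentiableAt

theorem hasFDerivAt_radialGrad_zero {L : ℝ}
    (hL : Tendsto (fun s => deriv ψ s / s) (𝓝[>] 0) (𝓝 L)) :
    HasFDerivAt (radialGrad ψ) (L • innerSL ℝ (E := E)) 0 := by
  rw [hasFDerivAt_iff_isLittleO_nhds_zero]
  refine Asymptotics.isLittleO_id_nhds_zero_of_tendsto_norm_div (by simp) ?_
  refine ((tendsto_zero_iff_norm_tendsto_zero.1 (tendsto_sub_nhds_zero_iff.2 hL)).comp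
    (tendsto_norm_nhdsNE_zero (E := E))).congr' ?_
  filter_upwards [self_mem_nhdsWithin] with x (hx : x ≠ 0)
  have hsub : radialGrad ψ x - (L • innerSL ℝ) x = (deriv ψ ‖x‖ / ‖x‖ - L) • innerSL ℝ x := by
    rw [radialGrad, sub_smul]; rfl
  rw [Function.comp_apply, zero_add, radialGrad_zero, sub_zero, hsub, norm_smul,
    innerSL_apply_norm, mul_div_cancel_right₀ _ (norm_ne_zero_iff.2 hx)]

theorem fderiv_radialGrad_zero_apply_self {L : ℝ}
    (hL : Tendsto (fun s => deriv ψ s / s) (𝓝[>] 0) (𝓝 L)) (x : E) :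
    fderiv ℝ (radialGrad ψ) 0 x x = L * ‖x‖ ^ 2 := by
  rw [(hasFDerivAt_radialGrad_zero hL).fderiv, smul_apply, smul_apply, innerSL_apply_apply,
    real_inner_self_eq_norm_sq, smul_eq_mul]

theorem tendsto_deriv_div_of_differentiableAt_radialGrad {e : E} (he : ‖e‖ = 1)
    (h : DifferentiableAt ℝ (radialGrad ψ) (0 : E)) :
    Tendsto (fun s => deriv ψ s / s) (𝓝[>] 0) (𝓝 (fderiv ℝ (radialGrad ψ) 0 e e)) := by
  have hline :
      HasDerivAt (fun s : ℝ => radialGrad ψ (s • e)) (fderiv ℝ (radialGrad ψ) 0 e) 0 := by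
    have := h.hasFDerivAt.comp_hasDerivAt_of_eq (0 : ℝ) ((hasDerivAt_id 0).smul_const e)
      (by simp)
    simpa [Function.comp_def] using this
  have hslope := ((ContinuousLinearMap.apply ℝ ℝ e).continuous.tendsto _).comp
    (hasDerivAt_iff_tendsto_slope_zero.1 hline)
  refine (hslope.mono_left (nhdsWithin_mono _ fun s (hs : 0 < s) => hs.ne')).congr' ?_
  filter_upwards [self_mem_nhdsWithin] with s (hs : 0 < s)
  simp [radialGrad, norm_smul, he, abs_of_pos hs]
  field_simp

end Radial

open scoped Classical in
theorem stmt5 (n : ℕ) (hn : 1 ≤ n) (ψ : ℝ → ℝ)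
    (hdiff : ∀ s ∈ Set.Ioi (0:ℝ), DifferentiableAt ℝ ψ s ∧ DifferentiableAt ℝ (deriv ψ) s)
    (hψ0 : Tendsto ψ (𝓝[>] 0) (𝓝 0))
    (hψ'0 : Tendsto (deriv ψ) (𝓝[>] 0) (𝓝 0)) :
    TwiceDiffAt (fun x : EuclideanSpace ℝ (Fin n) => if x = 0 then 0 else ψ ‖x‖) 0 ↔
      ∃ L : ℝ, Tendsto (fun s => deriv ψ s / s) (𝓝[>] 0) (𝓝 L) := by
  have hω : (fun x : EuclideanSpace ℝ (Fin n) => if x = 0 then 0 else ψ ‖x‖) = radial ψ := by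
    ext x; by_cases hx : x = 0 <;> simp [radial, hx]
  rw [hω]
  have hψ : ∀ s ∈ Ioi (0 : ℝ), DifferentiableAt ℝ ψ s := fun s hs => (hdiff s hs).1
  have hψ_ev : ∀ᶠ s in 𝓝[>] 0, DifferentiableAt ℝ ψ s := eventually_mem_nhdsWithin.mono hψ
  have hψ_div : Tendsto (fun s => ψ s / s) (𝓝[>] 0) (𝓝 0) := by
    simpa using tendsto_div_pow_succ_of_tendsto_deriv 0 hψ_ev hψ0 (by simpa using hψ'0)
  have hgrad := fderiv_radial (E := EuclideanSpace ℝ (Fin n)) hψ hψ_div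
  constructor
  · rintro ⟨-, hdiff2, -⟩
    rw [hgrad] at hdiff2
    have he : ‖EuclideanSpace.single (⟨0, hn⟩ : Fin n) (1 : ℝ)‖ = 1 := by simp
    exact ⟨_, tendsto_deriv_div_of_differentiableAt_radialGrad he hdiff2⟩
  · rintro ⟨L, hL⟩
    have hψ_sq : Tendsto (fun s => ψ s / s ^ 2) (𝓝[>] 0) (𝓝 (L / 2)) := by
      refine tendsto_div_pow_succ_of_tendsto_deriv 1 hψ_ev hψ0 ((hL.div_const 2).congr fun s => ?_)
      push_cast; ring
    refine ⟨.of_forall (differentiable_radial hψ hψ_div),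
      hgrad ▸ (hasFDerivAt_radialGrad_zero hL).differentiableAt, ?_⟩
    refine ((tendsto_radial_div_norm_sq hψ_sq).sub_const (L / 2)).congr' ?_ |>.trans (by simp)
    filter_upwards [self_mem_nhdsWithin] with x (hx : x ≠ 0)
    rw [hgrad, fderiv_radialGrad_zero_apply_self hL]
    simp
    field_simp
end

section
/- Any radially symmetric function ω: ℝⁿ → ℝ that is twice differentiable everywhere and whose Laplacian is continuous on ℝⁿ must be C² on ℝⁿ. -/
open Filter Topology Metric Set

/-!
Away from the origin the gradient of a radial `f` is `F(x) x` with `F = ∂ᵣf / r` again radial,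
so the Hessian is `F I + (∂ᵣF / r) x ⊗ x`. Its trace gives `r ∂ᵣF = Δf - n F`, which writes the
Hessian in terms of `F` and `Δf`, both continuous off the origin. At the origin `∇f = 0` by
symmetry, and the Hessian `H₀` satisfies `H₀(u, v) = 0` for `u ⊥ v`, so `H₀ = c I`.
Differentiability of `∇f` at `0` gives `F(x) → c`, hence `Δf - n F → Δf(0) - n c = 0`, and the
Hessian is continuous at the origin too.
-/

open scoped RealInnerProductSpace

def IsRadial {E α : Type*} [Norm E] (f : E → α) : Prop :=
  ∀ ⦃x y : E⦄, ‖x‖ = ‖y‖ → f x = f y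

section InnerProductSpace

variable {E : Type*} [NormedAddCommGroup E] [InnerProductSpace ℝ E]

-- `innerSL ℝ` is typed as conjugate-linear in its first argument; this is the same map, linear.
noncomputable def realInnerSL : E →L[ℝ] E →L[ℝ] ℝ := innerSL ℝ

@[simp] lemma realInnerSL_apply (x y : E) : realInnerSL x y = ⟪x, y⟫ := rfl

noncomputable def outerSelf (x : E) : E →L[ℝ] E →L[ℝ] ℝ :=
  (realInnerSL x).smulRight (realInnerSL x)

@[simp] lemma outerSelf_apply (x u v : E) : outerSelf x u v = ⟪x, u⟫ * ⟪x, v⟫ := rfl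

lemma norm_smul_outerSelf (r : ℝ) (x : E) : ‖r • outerSelf x‖ = |r| * ‖x‖ ^ 2 := by
  have h : r • outerSelf x = (r • realInnerSL x).smulRight (realInnerSL x) := by
    ext u v
    simp only [smul_apply, outerSelf_apply, ContinuousLinearMap.smulRight_apply,
      realInnerSL_apply, smul_eq_mul]
    ring
  rw [h, ContinuousLinearMap.norm_smulRight_apply, norm_smul, realInnerSL, innerSL_apply_norm,
    Real.norm_eq_abs]
  ring

lemma continuous_outerSelf : Continuous (outerSelf (E := E)) :=
  (ContinuousLinearMap.smulRightL ℝ E (E →L[ℝ] ℝ)).continuous₂.comp₂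
    (realInnerSL (E := E)).continuous realInnerSL.continuous

lemma tendsto_div_norm_sq_smul_outerSelf {l : Filter E} {g : E → ℝ} (hg : Tendsto g l (𝓝 0)) :
    Tendsto (fun y => (g y / ‖y‖ ^ 2) • outerSelf y) l (𝓝 0) := by
  have hbound : ∀ y, ‖(g y / ‖y‖ ^ 2) • outerSelf y‖ ≤ |g y| := fun y => by
    rw [norm_smul_outerSelf, abs_div, abs_of_nonneg (by positivity : (0 : ℝ) ≤ ‖y‖ ^ 2)]
    rcases eq_or_ne ‖y‖ 0 with h | h
    · simp [h]
    · rw [div_mul_cancel₀ _ (pow_ne_zero 2 h)]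
  exact squeeze_zero_norm (E := E →L[ℝ] E →L[ℝ] ℝ) hbound (by simpa using hg.abs)

lemma norm_cos_smul_add_sin_smul {x w : E} (hw : ⟪x, w⟫ = 0) (hxw : ‖w‖ = ‖x‖) (t : ℝ) :
    ‖Real.cos t • x + Real.sin t • w‖ = ‖x‖ := by
  have hsq : ‖Real.cos t • x + Real.sin t • w‖ ^ 2 = ‖x‖ ^ 2 := by
    rw [norm_add_sq_real, real_inner_smul_left, real_inner_smul_right, hw, norm_smul, norm_smul,
      hxw, Real.norm_eq_abs, Real.norm_eq_abs, mul_pow, mul_pow, sq_abs, sq_abs]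
    linear_combination ‖x‖ ^ 2 * Real.cos_sq_add_sin_sq t
  exact (pow_left_inj₀ (norm_nonneg _) (norm_nonneg _) two_ne_zero).1 hsq

variable {f : E → ℝ}

namespace IsRadial

lemma fderiv_apply_eq_zero_of_inner_eq_zero (hf : IsRadial f) {x w : E} (hx : x ≠ 0)
    (hd : DifferentiableAt ℝ f x) (hw : ⟪x, w⟫ = 0) : fderiv ℝ f x w = 0 := by
  rcases eq_or_ne w 0 with rfl | hw0
  · simp
  -- rescale `w` to the radius of `x`; `f` is constant on the great circle through `x` and `k • w`
  set k := ‖x‖ / ‖w‖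
  have hk : k ≠ 0 := div_ne_zero (norm_ne_zero_iff.2 hx) (norm_ne_zero_iff.2 hw0)
  have hkw : ‖k • w‖ = ‖x‖ := by
    rw [norm_smul, Real.norm_eq_abs, abs_of_nonneg (by positivity),
      div_mul_cancel₀ _ (norm_ne_zero_iff.2 hw0)]
  have hxkw : ⟪x, k • w⟫ = 0 := by rw [real_inner_smul_right, hw, mul_zero]
  have hc : HasDerivAt (fun t => Real.cos t • x + Real.sin t • (k • w)) (k • w) 0 := by
    simpa using ((Real.hasDerivAt_cos 0).smul_const x).fun_add
      ((Real.hasDerivAt_sin 0).smul_const (k • w))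
  have hfc : HasDerivAt (fun t => f (Real.cos t • x + Real.sin t • (k • w)))
      (fderiv ℝ f x (k • w)) 0 :=
    HasFDerivAt.comp_hasDerivAt (x := (0 : ℝ)) (by simpa using hd.hasFDerivAt) hc
  have hconst : (fun t => f (Real.cos t • x + Real.sin t • (k • w))) = fun _ => f x :=
    funext fun t => hf (norm_cos_smul_add_sin_smul hxkw hkw t)
  rw [hconst] at hfc
  have := hfc.unique (hasDerivAt_const 0 (f x))
  rwa [map_smul, smul_eq_zero, or_iff_right hk] at this

lemma fderiv_apply (hf : IsRadial f) {x : E} (hx : x ≠ 0) (hd : DifferentiableAt ℝ f x)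
    (v : E) : fderiv ℝ f x v = ⟪x, v⟫ / ‖x‖ ^ 2 * fderiv ℝ f x x := by
  set a := ⟪x, v⟫ / ‖x‖ ^ 2
  have hw : ⟪x, v - a • x⟫ = 0 := by
    rw [inner_sub_right, real_inner_smul_right, real_inner_self_eq_norm_sq,
      div_mul_cancel₀ _ (pow_ne_zero 2 (norm_ne_zero_iff.2 hx)), sub_self]
  have := hf.fderiv_apply_eq_zero_of_inner_eq_zero hx hd hw
  rwa [map_sub, map_smul, smul_eq_mul, sub_eq_zero] at this

lemma fderiv_apply_self_eq (hf : IsRadial f) {x y : E} (hx : DifferentiableAt ℝ f x)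
    (hy : DifferentiableAt ℝ f y) (hxy : ‖x‖ = ‖y‖) : fderiv ℝ f x x = fderiv ℝ f y y := by
  have hray : ∀ z, DifferentiableAt ℝ f z →
      HasDerivAt (fun t : ℝ => f (t • z)) (fderiv ℝ f z z) 1 := fun z hz => by
    refine HasFDerivAt.comp_hasDerivAt (x := (1 : ℝ)) (f := fun t : ℝ => t • z) ?_ ?_
    · simpa using hz.hasFDerivAt
    · simpa using (hasDerivAt_id (1 : ℝ)).smul_const z
  have hfun : (fun t : ℝ => f (t • x)) = fun t => f (t • y) :=
    funext fun t => hf (by rw [norm_smul, norm_smul, hxy])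
  exact (hray x hx).unique (hfun ▸ hray y hy)

lemma fderiv_zero (hf : IsRadial f) : fderiv ℝ f 0 = 0 := by
  have h := fderiv_comp_smul (f := f) (x := (0 : E)) (-1 : ℝ)
  have hneg : (fun y : E => f ((-1 : ℝ) • y)) = f :=
    funext fun y => hf (by rw [neg_one_smul, norm_neg])
  rw [hneg, smul_zero, neg_one_smul] at h
  ext v
  have hv := congrArg (· v) h
  simp only [neg_apply] at hv
  simp only [zero_apply]
  linarith

end IsRadial

-- For `f = ψ ∘ ‖·‖` this is `ψ'(r) / r`, and `∇f(y) = radialCoeff f y • y` off the origin.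
noncomputable def radialCoeff (f : E → ℝ) (y : E) : ℝ :=
  fderiv ℝ f y y / ‖y‖ ^ 2

lemma IsRadial.isRadial_radialCoeff (hf : IsRadial f) (hd : Differentiable ℝ f) :
    IsRadial (radialCoeff f) := fun x y hxy => by
  rw [radialCoeff, radialCoeff, hf.fderiv_apply_self_eq (hd x) (hd y) hxy, hxy]

lemma IsRadial.fderiv_eq_radialCoeff_smul (hf : IsRadial f) {x : E} (hx : x ≠ 0)
    (hd : DifferentiableAt ℝ f x) : fderiv ℝ f x = radialCoeff f x • realInnerSL x := by
  ext v
  rw [hf.fderiv_apply hx hd v, smul_apply, realInnerSL_apply, smul_eq_mul,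
    radialCoeff]
  ring

lemma differentiableAt_radialCoeff {x : E} (hx : x ≠ 0)
    (hd : DifferentiableAt ℝ (fderiv ℝ f) x) : DifferentiableAt ℝ (radialCoeff f) x := by
  have hx2 : ‖x‖ ^ 2 ≠ 0 := pow_ne_zero 2 (norm_ne_zero_iff.2 hx)
  have hnum := hd.clm_apply differentiableAt_fun_id
  have hden := differentiableAt_fun_id.norm_sq ℝ (x := x)
  unfold radialCoeff
  fun_prop (disch := exact hx2)

lemma IsRadial.fderiv_fderiv_eq (hf : IsRadial f) (hd : Differentiable ℝ f) {x : E} (hx : x ≠ 0)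
    (hd2 : DifferentiableAt ℝ (fderiv ℝ f) x) :
    fderiv ℝ (fderiv ℝ f) x = (fderiv ℝ (radialCoeff f) x x / ‖x‖ ^ 2) • outerSelf x
      + radialCoeff f x • realInnerSL := by
  have hloc : fderiv ℝ f =ᶠ[𝓝 x] radialCoeff f • ⇑realInnerSL := by
    filter_upwards [isOpen_compl_singleton.mem_nhds hx] with y hy
    exact hf.fderiv_eq_radialCoeff_smul hy (hd y)
  have hF := (differentiableAt_radialCoeff hx hd2).hasFDerivAt
  rw [hloc.fderiv_eq, (hF.smul realInnerSL.hasFDerivAt).fderiv]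
  ext u v
  have hFu := (hf.isRadial_radialCoeff hd).fderiv_apply hx (differentiableAt_radialCoeff hx hd2) u
  simp only [add_apply, smul_apply,
    ContinuousLinearMap.smulRight_apply, realInnerSL_apply, outerSelf_apply, smul_eq_mul, hFu]
  ring

section OrthogonalityPreserving

variable {B : E →L[ℝ] E →L[ℝ] ℝ}

lemma norm_sq_mul_apply_eq_of_inner_eq_zero (hB : ∀ u v, ⟪u, v⟫ = 0 → B u v = 0) (u v : E) :
    ‖u‖ ^ 2 * B u v = ⟪u, v⟫ * B u u ∧ ‖u‖ ^ 2 * B v u = ⟪u, v⟫ * B u u := by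
  have hperp : ⟪u, ‖u‖ ^ 2 • v - ⟪u, v⟫ • u⟫ = 0 := by
    rw [inner_sub_right, real_inner_smul_right, real_inner_smul_right,
      real_inner_self_eq_norm_sq]
    ring
  have hl := hB _ _ hperp
  have hr := hB _ _ (real_inner_comm u _ ▸ hperp)
  rw [map_sub, map_smul, map_smul, smul_eq_mul, smul_eq_mul, sub_eq_zero] at hl
  rw [map_sub, map_smul, map_smul, sub_apply, smul_apply, smul_apply, smul_eq_mul,
    smul_eq_mul, sub_eq_zero] at hr
  exact ⟨hl, hr⟩

lemma apply_self_div_norm_sq_eq_of_inner_ne_zero (hB : ∀ u v, ⟪u, v⟫ = 0 → B u v = 0)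
    {u v : E} (huv : ⟪u, v⟫ ≠ 0) : B u u / ‖u‖ ^ 2 = B v v / ‖v‖ ^ 2 := by
  have hu : ‖u‖ ^ 2 ≠ 0 := by rintro h; simp_all
  have hv : ‖v‖ ^ 2 ≠ 0 := by rintro h; simp_all
  have h1 := (norm_sq_mul_apply_eq_of_inner_eq_zero hB u v).1
  have h2 := (norm_sq_mul_apply_eq_of_inner_eq_zero hB v u).2
  rw [real_inner_comm] at h2
  rw [div_eq_div_iff hu hv]
  apply mul_left_cancel₀ huv
  linear_combination ‖u‖ ^ 2 * h2 - ‖v‖ ^ 2 * h1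

lemma exists_eq_smul_realInnerSL_of_inner_eq_zero (hB : ∀ u v, ⟪u, v⟫ = 0 → B u v = 0) :
    ∃ c : ℝ, B = c • realInnerSL := by
  by_cases hE : ∃ e : E, e ≠ 0
  · obtain ⟨e, he⟩ := hE
    refine ⟨B e e / ‖e‖ ^ 2, ?_⟩
    have hconst : ∀ u, u ≠ 0 → B u u / ‖u‖ ^ 2 = B e e / ‖e‖ ^ 2 := fun u hu => by
      by_cases hue : ⟪u, e⟫ = 0
      · have h1 : ⟪u, u + e⟫ ≠ 0 := by
          rw [inner_add_right, hue, add_zero, real_inner_self_eq_norm_sq]; positivity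
        have h2 : ⟪u + e, e⟫ ≠ 0 := by
          rw [inner_add_left, hue, zero_add, real_inner_self_eq_norm_sq]; positivity
        exact (apply_self_div_norm_sq_eq_of_inner_ne_zero hB h1).trans
          (apply_self_div_norm_sq_eq_of_inner_ne_zero hB h2)
      · exact apply_self_div_norm_sq_eq_of_inner_ne_zero hB hue
    ext u v
    rw [smul_apply, smul_apply, realInnerSL_apply, smul_eq_mul]
    rcases eq_or_ne u 0 with rfl | hu
    · simp
    rw [← hconst u hu, div_mul_eq_mul_div, eq_div_iff (pow_ne_zero 2 (norm_ne_zero_iff.2 hu))]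
    linear_combination (norm_sq_mul_apply_eq_of_inner_eq_zero hB u v).1
  · push Not at hE
    exact ⟨0, by ext u v; simp [hE u]⟩

end OrthogonalityPreserving

lemma IsRadial.fderiv_fderiv_zero_apply_eq_zero (hf : IsRadial f) (hd : Differentiable ℝ f)
    (h0 : DifferentiableAt ℝ (fderiv ℝ f) 0) {u v : E} (huv : ⟪u, v⟫ = 0) :
    fderiv ℝ (fderiv ℝ f) 0 u v = 0 := by
  have hline : HasDerivAt (fun t : ℝ => fderiv ℝ f (t • u)) (fderiv ℝ (fderiv ℝ f) 0 u) 0 :=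
    HasFDerivAt.comp_hasDerivAt (x := (0 : ℝ)) (by simpa using h0.hasFDerivAt)
      (by simpa using (hasDerivAt_id (0 : ℝ)).smul_const u)
  have happ := hline.clm_apply (hasDerivAt_const (0 : ℝ) v)
  have hzero : (fun t : ℝ => fderiv ℝ f (t • u) v) = fun _ => 0 := funext fun t => by
    rcases eq_or_ne (t • u) 0 with h | h
    · rw [h, hf.fderiv_zero, zero_apply]
    · rw [hf.fderiv_eq_radialCoeff_smul h (hd _), smul_apply, realInnerSL_apply,
        real_inner_smul_left, huv, mul_zero, smul_zero]
  simp only [hzero, map_zero, add_zero] at happ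
  exact happ.unique (hasDerivAt_const 0 0)

lemma IsRadial.exists_fderiv_fderiv_zero_eq_smul (hf : IsRadial f) (hd : Differentiable ℝ f)
    (h0 : DifferentiableAt ℝ (fderiv ℝ f) 0) :
    ∃ c : ℝ, fderiv ℝ (fderiv ℝ f) 0 = c • realInnerSL :=
  exists_eq_smul_realInnerSL_of_inner_eq_zero fun _ _ =>
    hf.fderiv_fderiv_zero_apply_eq_zero hd h0

lemma tendsto_radialCoeff_nhdsNE_zero {c : ℝ} (h0 : fderiv ℝ f 0 = 0)
    (hH : HasFDerivAt (fderiv ℝ f) (c • realInnerSL) 0) :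
    Tendsto (radialCoeff f) (𝓝[≠] 0) (𝓝 c) := by
  rw [tendsto_iff_norm_sub_tendsto_zero]
  refine squeeze_zero_norm' ?_ ((hasFDerivAt_iff_tendsto.1 hH).mono_left nhdsWithin_le_nhds)
  filter_upwards [self_mem_nhdsWithin] with y (hy : y ≠ 0)
  have hy2 : 0 < ‖y‖ ^ 2 := by positivity
  have hquot : radialCoeff f y - c = (fderiv ℝ f y - c • realInnerSL y) y / ‖y‖ ^ 2 := by
    rw [radialCoeff, sub_apply, smul_apply, realInnerSL_apply, real_inner_self_eq_norm_sq,
      smul_eq_mul]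
    field_simp
  rw [norm_norm, hquot, norm_div, norm_pow, norm_norm, h0, sub_zero, sub_zero, smul_apply,
    div_le_iff₀ hy2]
  calc ‖(fderiv ℝ f y - c • realInnerSL y) y‖
      ≤ ‖fderiv ℝ f y - c • realInnerSL y‖ * ‖y‖ := ContinuousLinearMap.le_opNorm _ _
    _ = ‖y‖⁻¹ * ‖fderiv ℝ f y - c • realInnerSL y‖ * ‖y‖ ^ 2 := by
      field_simp

end InnerProductSpace

section EuclideanSpace

variable {n : ℕ} {f : EuclideanSpace ℝ (Fin n) → ℝ}

-- instance search does not find this for iterated continuous linear maps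
noncomputable local instance : ContinuousAdd
    (EuclideanSpace ℝ (Fin n) →L[ℝ] EuclideanSpace ℝ (Fin n) →L[ℝ] ℝ) :=
  (inferInstance : IsTopologicalAddGroup
    (EuclideanSpace ℝ (Fin n) →L[ℝ] EuclideanSpace ℝ (Fin n) →L[ℝ] ℝ)).toContinuousAdd

lemma lap_eq_sum_fderiv_fderiv {x : EuclideanSpace ℝ (Fin n)}
    (hd2 : DifferentiableAt ℝ (fderiv ℝ f) x) :
    lap f x = ∑ i, fderiv ℝ (fderiv ℝ f) x (EuclideanSpace.single i 1)
      (EuclideanSpace.single i 1) := by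
  refine Finset.sum_congr rfl fun i _ => ?_
  unfold spd pd
  rw [fderiv_clm_apply hd2 (differentiableAt_const _)]
  simp

lemma sum_outerSelf_single (x : EuclideanSpace ℝ (Fin n)) :
    ∑ i, outerSelf x (EuclideanSpace.single i 1) (EuclideanSpace.single i 1) = ‖x‖ ^ 2 := by
  rw [← real_inner_self_eq_norm_sq, ← (EuclideanSpace.basisFun (Fin n) ℝ).sum_inner_mul_inner x x]
  refine Finset.sum_congr rfl fun i _ => ?_
  rw [outerSelf_apply, EuclideanSpace.basisFun_apply, real_inner_comm x]

lemma sum_realInnerSL_single :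
    ∑ i, realInnerSL (EuclideanSpace.single i 1 : EuclideanSpace ℝ (Fin n))
      (EuclideanSpace.single i 1) = n := by
  simp

lemma lap_eq_of_fderiv_fderiv_eq {x : EuclideanSpace ℝ (Fin n)} {a b : ℝ}
    (hd2 : DifferentiableAt ℝ (fderiv ℝ f) x)
    (h : fderiv ℝ (fderiv ℝ f) x = a • outerSelf x + b • realInnerSL) :
    lap f x = a * ‖x‖ ^ 2 + n * b := by
  simp only [lap_eq_sum_fderiv_fderiv hd2, h, add_apply, smul_apply, smul_eq_mul,
    Finset.sum_add_distrib, ← Finset.mul_sum, sum_outerSelf_single, sum_realInnerSL_single]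
  ring

noncomputable def radialHessian (f : EuclideanSpace ℝ (Fin n) → ℝ) (y : EuclideanSpace ℝ (Fin n)) :
    EuclideanSpace ℝ (Fin n) →L[ℝ] EuclideanSpace ℝ (Fin n) →L[ℝ] ℝ :=
  ((lap f y - n * radialCoeff f y) / ‖y‖ ^ 2) • outerSelf y + radialCoeff f y • realInnerSL

lemma IsRadial.fderiv_fderiv_eq_radialHessian (hf : IsRadial f) (hd : Differentiable ℝ f)
    {x : EuclideanSpace ℝ (Fin n)} (hx : x ≠ 0) (hd2 : DifferentiableAt ℝ (fderiv ℝ f) x) :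
    fderiv ℝ (fderiv ℝ f) x = radialHessian f x := by
  have h := hf.fderiv_fderiv_eq hd hx hd2
  rw [h, radialHessian, lap_eq_of_fderiv_fderiv_eq hd2 h]
  congr 2
  field_simp
  ring

lemma continuousAt_radialHessian {x : EuclideanSpace ℝ (Fin n)} (hx : x ≠ 0)
    (hd2 : DifferentiableAt ℝ (fderiv ℝ f) x) (hlap : ContinuousAt (lap f) x) :
    ContinuousAt (radialHessian f) x := by
  have hF := (differentiableAt_radialCoeff hx hd2).continuousAt
  have hnorm : ContinuousAt (fun y : EuclideanSpace ℝ (Fin n) => ‖y‖ ^ 2) x := by fun_prop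
  exact (((hlap.sub (hF.const_mul _)).div hnorm (pow_ne_zero 2 (norm_ne_zero_iff.2 hx))).smul
    continuous_outerSelf.continuousAt).add (hF.smul continuousAt_const)

set_option synthInstance.maxHeartbeats 100000 in
lemma IsRadial.continuousAt_fderiv_fderiv_zero (hf : IsRadial f) (hd : Differentiable ℝ f)
    (hd2 : Differentiable ℝ (fderiv ℝ f)) (hlap : ContinuousAt (lap f) 0) :
    ContinuousAt (fderiv ℝ (fderiv ℝ f)) 0 := by
  obtain ⟨c, hc⟩ := hf.exists_fderiv_fderiv_zero_eq_smul hd (hd2 0)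
  have hF := tendsto_radialCoeff_nhdsNE_zero hf.fderiv_zero (hc ▸ (hd2 0).hasFDerivAt)
  have hlap0 : lap f 0 = n * c := by
    simp only [lap_eq_sum_fderiv_fderiv (hd2 0), hc, smul_apply, smul_eq_mul, ← Finset.mul_sum,
      sum_realInnerSL_single, mul_comm]
  have hdefect : Tendsto (fun y => lap f y - n * radialCoeff f y) (𝓝[≠] 0) (𝓝 0) := by
    have h := (hlap.tendsto.mono_left nhdsWithin_le_nhds).sub (hF.const_mul (n : ℝ))
    rwa [hlap0, sub_self] at h
  have hlim : Tendsto (radialHessian f) (𝓝[≠] 0) (𝓝 (c • realInnerSL)) := by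
    have h := (tendsto_div_norm_sq_smul_outerSelf hdefect).add
      (hF.smul_const (realInnerSL : EuclideanSpace ℝ (Fin n) →L[ℝ] _))
    convert h using 2 <;> ext u v <;> simp [radialHessian]
  rw [← continuousWithinAt_compl_self, ContinuousWithinAt, hc]
  exact hlim.congr' (eventually_nhdsWithin_of_forall fun y hy =>
    (hf.fderiv_fderiv_eq_radialHessian hd hy (hd2 y)).symm)

lemma IsRadial.continuous_fderiv_fderiv (hf : IsRadial f) (hd : Differentiable ℝ f)
    (hd2 : Differentiable ℝ (fderiv ℝ f)) (hlap : Continuous (lap f)) :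
    Continuous (fderiv ℝ (fderiv ℝ f)) := by
  refine continuous_iff_continuousAt.2 fun x => ?_
  rcases eq_or_ne x 0 with rfl | hx
  · exact hf.continuousAt_fderiv_fderiv_zero hd hd2 hlap.continuousAt
  · refine (continuousAt_radialHessian hx (hd2 x) hlap.continuousAt).congr ?_
    filter_upwards [isOpen_compl_singleton.mem_nhds hx] with y hy
    exact (hf.fderiv_fderiv_eq_radialHessian hd hy (hd2 y)).symm

end EuclideanSpace

lemma contDiff_two_of_continuous_fderiv_fderiv {𝕜 E F : Type*} [NontriviallyNormedField 𝕜]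
    [NormedAddCommGroup E] [NormedSpace 𝕜 E] [NormedAddCommGroup F] [NormedSpace 𝕜 F]
    {f : E → F} (hd : Differentiable 𝕜 f) (hd2 : Differentiable 𝕜 (fderiv 𝕜 f))
    (hc : Continuous (fderiv 𝕜 (fderiv 𝕜 f))) : ContDiff 𝕜 2 f := by
  rw [show (2 : WithTop ℕ∞) = 1 + 1 from rfl, contDiff_succ_iff_fderiv, contDiff_one_iff_fderiv]
  exact ⟨hd, by simp, hd2, hc⟩

theorem stmt8_general (n : ℕ) (ω : EuclideanSpace ℝ (Fin n) → ℝ)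
    (hrad : ∃ ψ : ℝ → ℝ, ∀ x, ω x = ψ ‖x‖)
    (htd : ∀ p, TwiceDiffAt ω p)
    (hlap : Continuous (fun x => lap ω x)) :
    ContDiff ℝ 2 ω := by
  obtain ⟨ψ, hψ⟩ := hrad
  have hf : IsRadial ω := fun x y hxy => by rw [hψ, hψ, hxy]
  have hd : Differentiable ℝ ω := fun p => (htd p).1.self_of_nhds
  have hd2 : Differentiable ℝ (fderiv ℝ ω) := fun p => (htd p).2.1
  exact contDiff_two_of_continuous_fderiv_fderiv hd hd2 (hf.continuous_fderiv_fderiv hd hd2 hlap)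

theorem stmt8 (n : ℕ) (hn : 1 ≤ n) (ω : EuclideanSpace ℝ (Fin n) → ℝ)
    (hrad : ∃ ψ : ℝ → ℝ, ∀ x, ω x = ψ ‖x‖)
    (htd : ∀ p, TwiceDiffAt ω p)
    (hlap : Continuous (fun x => lap ω x)) :
    ContDiff ℝ 2 ω :=
  stmt8_general n ω hrad htd hlap
end

section
/- Let φ: (0,∞) → ℝ be C² with lim_{s→∞} φ(s) = ∞, lim_{s→∞} φ'(s) = 0, lim_{s→∞} φ''(s) = 0, and let η: [0,∞) → [0,1] be a fixed non-increasing C^∞ function with η ≡ 1 on [0,1/2] and η ≡ 0 on [2/3,∞). For 0 < t ≤ 1/2 define u_t: ℝⁿ → ℝ (n ≥ 2) by u_t(x) = η(|x|) x₁ x₂ |x|^{2t} φ(−ln|x|²) for 0 < |x| < 1, u_t(0) = 0, and u_t(x) = 0 for |x| ≥ 1. Then for all j with 3 ≤ j ≤ n, the mixed second partial derivatives ∂²u_t/∂x₁∂x_j are bounded on ℝⁿ uniformly in t, i.e. there is a constant C depending only on η and φ (not on t) with sup_x |∂²u_t/∂x₁∂x_j(x)| ≤ C. -/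
open Filter Topology Metric Set

section Aux
variable (φ η : ℝ → ℝ) (t : ℝ)

noncomputable def Wf : ℝ → ℝ := fun r => r ^ t * φ (-Real.log r)
noncomputable def F1 : ℝ → ℝ := fun r =>
  r ^ (t-1) * (t * φ (-Real.log r) - deriv φ (-Real.log r))
noncomputable def F2 : ℝ → ℝ := fun r =>
  r ^ (t-2) * ((t*(t-1)) * φ (-Real.log r) - (2*t-1) * deriv φ (-Real.log r)
    + deriv (deriv φ) (-Real.log r))
noncomputable def Hh : ℝ → ℝ := fun r => η (Real.sqrt r)
noncomputable def Gg : ℝ → ℝ := fun r => Hh η r * Wf φ t r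
noncomputable def dG : ℝ → ℝ := fun r => deriv (Hh η) r * Wf φ t r + Hh η r * F1 φ t r
noncomputable def ddG : ℝ → ℝ := fun r =>
  deriv (deriv (Hh η)) r * Wf φ t r + 2 * deriv (Hh η) r * F1 φ t r + Hh η r * F2 φ t r

variable {φ η t}

lemma phi_hasDeriv (hφ : ContDiffOn ℝ 2 φ (Set.Ioi 0)) {s : ℝ} (hs : 0 < s) :
    HasDerivAt φ (deriv φ s) s :=
  (((hφ.differentiableOn (by norm_num)).differentiableAt (Ioi_mem_nhds hs))).hasDerivAt

lemma dphi_contDiffOn (hφ : ContDiffOn ℝ 2 φ (Set.Ioi 0)) :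
    ContDiffOn ℝ 1 (deriv φ) (Set.Ioi 0) :=
  hφ.deriv_of_isOpen isOpen_Ioi (by norm_num)

lemma dphi_hasDeriv (hφ : ContDiffOn ℝ 2 φ (Set.Ioi 0)) {s : ℝ} (hs : 0 < s) :
    HasDerivAt (deriv φ) (deriv (deriv φ) s) s :=
  ((((dphi_contDiffOn hφ).differentiableOn (by norm_num)).differentiableAt
    (Ioi_mem_nhds hs))).hasDerivAt

lemma ddphi_continuousOn (hφ : ContDiffOn ℝ 2 φ (Set.Ioi 0)) :
    ContinuousOn (deriv (deriv φ)) (Set.Ioi 0) :=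
  ((dphi_contDiffOn hφ).deriv_of_isOpen (m := 0) isOpen_Ioi (by norm_num)).continuousOn

lemma dphi_continuousOn (hφ : ContDiffOn ℝ 2 φ (Set.Ioi 0)) :
    ContinuousOn (deriv φ) (Set.Ioi 0) :=
  (dphi_contDiffOn hφ).continuousOn

lemma bound_of_tendsto {g : ℝ → ℝ} {a : ℝ} (ha : 0 < a) (hc : ContinuousOn g (Set.Ioi 0))
    (hg : Tendsto g atTop (𝓝 0)) : ∃ M, 0 ≤ M ∧ ∀ s, a ≤ s → |g s| ≤ M := by
  obtain ⟨N, hN⟩ := Metric.tendsto_atTop.mp hg 1 one_pos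
  set b := max N a with hb
  have hcomp : IsCompact (Set.Icc a b) := isCompact_Icc
  obtain ⟨M0, hM0⟩ := hcomp.exists_bound_of_continuousOn
    (hc.mono (fun x hx => lt_of_lt_of_le ha hx.1))
  refine ⟨max M0 1 ⊔ 0, le_max_right _ _, fun s hs => ?_⟩
  rcases le_total s b with h | h
  · exact le_trans (by simpa using hM0 s ⟨hs, h⟩) (le_trans (le_max_left _ _) (le_max_left _ _))
  · have := hN s (le_trans (le_max_left N a) h)
    rw [Real.dist_eq, sub_zero] at this
    exact le_trans this.le (le_trans (le_max_right _ _) (le_max_left _ _))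

end Aux

section Aux2
variable {φ η : ℝ → ℝ} {t : ℝ}

lemma phi_growth (hφ : ContDiffOn ℝ 2 φ (Set.Ioi 0)) {a M1 : ℝ} (ha : 0 < a) (hM1 : 0 ≤ M1)
    (hb : ∀ s, a ≤ s → |deriv φ s| ≤ M1) :
    ∀ s, a ≤ s → |φ s| ≤ |φ a| + M1 * s := by
  intro s hs
  have key := norm_image_sub_le_of_norm_deriv_le_segment'
    (f := φ) (f' := deriv φ) (a := a) (b := s) (C := M1)
    (fun x hx => (phi_hasDeriv hφ (lt_of_lt_of_le ha hx.1)).hasDerivWithinAt)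
    (fun x hx => hb x hx.1) s ⟨hs, le_refl s⟩
  rw [Real.norm_eq_abs] at key
  have : |φ s| - |φ a| ≤ M1 * (s - a) := le_trans (abs_sub_abs_le_abs_sub _ _) key
  nlinarith [abs_nonneg (φ a)]

lemma Wf_hasDeriv (hφ : ContDiffOn ℝ 2 φ (Set.Ioi 0)) {r : ℝ} (hr : 0 < r) (hr1 : r < 1) :
    HasDerivAt (Wf φ t) (F1 φ t r) r := by
  have hs : 0 < -Real.log r := by
    simpa using Real.log_neg hr hr1
  have h1 : HasDerivAt (fun x : ℝ => x ^ t) (t * r ^ (t - 1)) r :=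
    Real.hasDerivAt_rpow_const (Or.inl hr.ne')
  have h2 : HasDerivAt (fun x : ℝ => φ (-Real.log x)) (deriv φ (-Real.log r) * (-r⁻¹)) r :=
    (phi_hasDeriv hφ hs).comp r ((Real.hasDerivAt_log hr.ne').neg)
  have : HasDerivAt (Wf φ t) _ r := h1.mul h2
  convert this using 1
  have hrt : r ^ (t - 1) = r ^ t / r := by
    rw [Real.rpow_sub hr, Real.rpow_one]
  simp only [Wf, F1]; rw [hrt]
  field_simp
  ring

lemma F1_hasDeriv (hφ : ContDiffOn ℝ 2 φ (Set.Ioi 0)) {r : ℝ} (hr : 0 < r) (hr1 : r < 1) :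
    HasDerivAt (F1 φ t) (F2 φ t r) r := by
  have hs : 0 < -Real.log r := by
    simpa using Real.log_neg hr hr1
  have h1 : HasDerivAt (fun x : ℝ => x ^ (t-1)) ((t-1) * r ^ (t - 1 - 1)) r :=
    Real.hasDerivAt_rpow_const (Or.inl hr.ne')
  have h2 : HasDerivAt (fun x : ℝ => t * φ (-Real.log x) - deriv φ (-Real.log x))
      (t * (deriv φ (-Real.log r) * (-r⁻¹)) - deriv (deriv φ) (-Real.log r) * (-r⁻¹)) r := by
    have hb := (dphi_hasDeriv hφ hs).comp r ((Real.hasDerivAt_log hr.ne').neg)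
    exact (((phi_hasDeriv hφ hs).comp r ((Real.hasDerivAt_log hr.ne').neg)).const_mul t).sub
      hb
  have : HasDerivAt (F1 φ t) _ r := h1.mul h2
  convert this using 1
  have hrt : r ^ (t - 1 - 1) = r ^ (t-1) / r := by
    rw [show t - 1 - 1 = (t-1) - 1 by ring, Real.rpow_sub hr, Real.rpow_one]
  have hrt2 : r ^ (t - 2) = r ^ (t-1) / r := by
    rw [show t - 2 = (t-1) - 1 by ring, Real.rpow_sub hr, Real.rpow_one]
  simp only [F1, F2]; rw [hrt, hrt2]
  field_simp
  ring

end Aux2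

section Aux3
variable {φ η : ℝ → ℝ} {t : ℝ}

lemma Hh_contDiffOn (hη : ContDiff ℝ (⊤ : ℕ∞) η) : ContDiffOn ℝ (⊤ : ℕ∞) (Hh η) (Set.Ioi 0) := by
  intro r hr
  exact (hη.contDiffAt.comp r (Real.contDiffAt_sqrt (ne_of_gt hr))).contDiffWithinAt

lemma Hh_hasDeriv (hη : ContDiff ℝ (⊤ : ℕ∞) η) {r : ℝ} (hr : 0 < r) :
    HasDerivAt (Hh η) (deriv (Hh η) r) r :=
  ((((Hh_contDiffOn hη).differentiableOn (by simp)).differentiableAt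
    (Ioi_mem_nhds hr))).hasDerivAt

lemma dHh_contDiffOn (hη : ContDiff ℝ (⊤ : ℕ∞) η) : ContDiffOn ℝ (⊤ : ℕ∞) (deriv (Hh η)) (Set.Ioi 0) :=
  (Hh_contDiffOn hη).deriv_of_isOpen isOpen_Ioi (by simp)

lemma dHh_hasDeriv (hη : ContDiff ℝ (⊤ : ℕ∞) η) {r : ℝ} (hr : 0 < r) :
    HasDerivAt (deriv (Hh η)) (deriv (deriv (Hh η)) r) r :=
  ((((dHh_contDiffOn hη).differentiableOn (by simp)).differentiableAt
    (Ioi_mem_nhds hr))).hasDerivAt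

lemma ddHh_continuousOn (hη : ContDiff ℝ (⊤ : ℕ∞) η) :
    ContinuousOn (deriv (deriv (Hh η))) (Set.Ioi 0) :=
  ((dHh_contDiffOn hη).deriv_of_isOpen (m := (⊤ : ℕ∞)) isOpen_Ioi (by simp)).continuousOn

-- vanishing for r > 4/9
lemma Hh_eq_zero (hη0 : ∀ s : ℝ, 2/3 ≤ s → η s = 0) {r : ℝ} (hr : (4:ℝ)/9 < r) :
    Hh η r = 0 := by
  apply hη0
  rw [show (2:ℝ)/3 = Real.sqrt ((4:ℝ)/9) by
    rw [show (4:ℝ)/9 = (2/3)^2 by norm_num, Real.sqrt_sq (by norm_num)]]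
  exact Real.sqrt_le_sqrt hr.le

lemma dHh_eq_zero (hη0 : ∀ s : ℝ, 2/3 ≤ s → η s = 0) {r : ℝ} (hr : (4:ℝ)/9 < r) :
    deriv (Hh η) r = 0 := by
  have hev : Hh η =ᶠ[𝓝 r] (fun _ => 0) := by
    filter_upwards [Ioi_mem_nhds hr] with u hu
    exact Hh_eq_zero hη0 hu
  rw [hev.deriv_eq, deriv_const]

lemma ddHh_eq_zero (hη0 : ∀ s : ℝ, 2/3 ≤ s → η s = 0) {r : ℝ} (hr : (4:ℝ)/9 < r) :
    deriv (deriv (Hh η)) r = 0 := by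
  have hev : deriv (Hh η) =ᶠ[𝓝 r] (fun _ => 0) := by
    filter_upwards [Ioi_mem_nhds hr] with u hu
    exact dHh_eq_zero hη0 hu
  rw [hev.deriv_eq, deriv_const]

-- constancy for r < 1/4
lemma Hh_eq_one (hη1 : ∀ s ∈ Set.Icc (0:ℝ) (1/2), η s = 1) {r : ℝ} (hr : r < (1:ℝ)/4) :
    Hh η r = 1 := by
  apply hη1
  constructor
  · exact Real.sqrt_nonneg r
  · rcases le_or_gt r 0 with h | h
    · rw [Real.sqrt_eq_zero_of_nonpos h]; norm_num
    · rw [show (1:ℝ)/2 = Real.sqrt ((1:ℝ)/4) by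
        rw [show (1:ℝ)/4 = (1/2)^2 by norm_num, Real.sqrt_sq (by norm_num)]]
      exact Real.sqrt_le_sqrt hr.le

lemma dHh_eq_zero' (hη1 : ∀ s ∈ Set.Icc (0:ℝ) (1/2), η s = 1) {r : ℝ} (hr : r < (1:ℝ)/4) :
    deriv (Hh η) r = 0 := by
  have hev : Hh η =ᶠ[𝓝 r] (fun _ => 1) := by
    filter_upwards [Iio_mem_nhds hr] with u hu
    exact Hh_eq_one hη1 hu
  rw [hev.deriv_eq, deriv_const]

lemma ddHh_eq_zero' (hη1 : ∀ s ∈ Set.Icc (0:ℝ) (1/2), η s = 1) {r : ℝ} (hr : r < (1:ℝ)/4) :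
    deriv (deriv (Hh η)) r = 0 := by
  have hev : deriv (Hh η) =ᶠ[𝓝 r] (fun _ => 0) := by
    filter_upwards [Iio_mem_nhds hr] with u hu
    exact dHh_eq_zero' hη1 hu
  rw [hev.deriv_eq, deriv_const]

lemma Gg_hasDeriv (hφ : ContDiffOn ℝ 2 φ (Set.Ioi 0)) (hη : ContDiff ℝ (⊤ : ℕ∞) η)
    (hη0 : ∀ s : ℝ, 2/3 ≤ s → η s = 0) {r : ℝ} (hr : 0 < r) :
    HasDerivAt (Gg φ η t) (dG φ η t r) r := by
  rcases lt_or_ge r 1 with h1 | h1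
  · exact (Hh_hasDeriv hη hr).mul (Wf_hasDeriv hφ hr h1)
  · have h49 : (4:ℝ)/9 < r := by linarith
    have hval : dG φ η t r = 0 := by
      simp [dG, Hh_eq_zero hη0 h49, dHh_eq_zero hη0 h49]
    rw [hval]
    apply (hasDerivAt_const r (0:ℝ)).congr_of_eventuallyEq
    filter_upwards [Ioi_mem_nhds h49] with u hu
    simp [Gg, Hh_eq_zero hη0 hu]

lemma dG_hasDeriv (hφ : ContDiffOn ℝ 2 φ (Set.Ioi 0)) (hη : ContDiff ℝ (⊤ : ℕ∞) η)
    (hη0 : ∀ s : ℝ, 2/3 ≤ s → η s = 0) {r : ℝ} (hr : 0 < r) :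
    HasDerivAt (dG φ η t) (ddG φ η t r) r := by
  rcases lt_or_ge r 1 with h1 | h1
  · have : HasDerivAt (dG φ η t) _ r := ((dHh_hasDeriv hη hr).mul (Wf_hasDeriv (t := t) hφ hr h1)).add
      ((Hh_hasDeriv hη hr).mul (F1_hasDeriv (t := t) hφ hr h1))
    convert this using 1
    simp only [ddG]; ring
  · have h49 : (4:ℝ)/9 < r := by linarith
    have hval : ddG φ η t r = 0 := by
      simp [ddG, Hh_eq_zero hη0 h49, dHh_eq_zero hη0 h49, ddHh_eq_zero hη0 h49]
    rw [hval]
    apply (hasDerivAt_const r (0:ℝ)).congr_of_eventuallyEq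
    filter_upwards [Ioi_mem_nhds h49] with u hu
    simp [dG, Hh_eq_zero hη0 hu, dHh_eq_zero hη0 hu]

end Aux3

section Key
variable {φ η : ℝ → ℝ}

set_option maxHeartbeats 2000000 in
lemma keybound (hφ : ContDiffOn ℝ 2 φ (Set.Ioi 0))
    (h2 : Tendsto (deriv φ) atTop (𝓝 0))
    (h3 : Tendsto (deriv (deriv φ)) atTop (𝓝 0))
    (hη : ContDiff ℝ (⊤ : ℕ∞) η)
    (hη1 : ∀ s ∈ Set.Icc (0:ℝ) (1/2), η s = 1)
    (hη0 : ∀ s : ℝ, 2/3 ≤ s → η s = 0) :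
    ∃ C : ℝ, 0 ≤ C ∧ ∀ t : ℝ, 0 < t → t ≤ 1/2 → ∀ r : ℝ, 0 < r →
      2*r*|dG φ η t r| + 4*r^2*|ddG φ η t r| ≤ C := by
  have ha : (0:ℝ) < Real.log 2 := Real.log_pos (by norm_num)
  obtain ⟨M1, hM1n, hM1⟩ := bound_of_tendsto ha (dphi_continuousOn hφ) h2
  obtain ⟨M2, hM2n, hM2⟩ := bound_of_tendsto ha (ddphi_continuousOn hφ) h3
  set A := |φ (Real.log 2)| with hA
  have hAn : 0 ≤ A := abs_nonneg _
  have hgrow : ∀ s, Real.log 2 ≤ s → |φ s| ≤ A + M1 * s := phi_growth hφ ha hM1n hM1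
  set Aφ := A + M1 * Real.log 5 with hAφ
  have hAφn : 0 ≤ Aφ := by
    have : (0:ℝ) < Real.log 5 := Real.log_pos (by norm_num)
    positivity
  -- compact bounds on Hh and derivatives
  have hIcc : Set.Icc (1/5 : ℝ) (1/2) ⊆ Set.Ioi 0 := fun x hx => by
    simp only [Set.mem_Ioi]; linarith [hx.1]
  obtain ⟨B0, hB0⟩ := (isCompact_Icc (a := (1/5:ℝ)) (b := 1/2)).exists_bound_of_continuousOn
    (((Hh_contDiffOn hη).continuousOn).mono hIcc)
  obtain ⟨B1, hB1⟩ := (isCompact_Icc (a := (1/5:ℝ)) (b := 1/2)).exists_bound_of_continuousOn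
    (((dHh_contDiffOn hη).continuousOn).mono hIcc)
  obtain ⟨B2, hB2⟩ := (isCompact_Icc (a := (1/5:ℝ)) (b := 1/2)).exists_bound_of_continuousOn
    ((ddHh_continuousOn hη).mono hIcc)
  set MH := max (max B0 B1) (max B2 0) with hMH
  have hMHn : 0 ≤ MH := le_trans (le_max_right B2 0) (le_max_right _ _)
  have hMH0 : ∀ r ∈ Set.Icc (1/5:ℝ) (1/2), |Hh η r| ≤ MH := fun r hr =>
    le_trans (by simpa using hB0 r hr) (le_trans (le_max_left _ _) (le_max_left _ _))
  have hMH1 : ∀ r ∈ Set.Icc (1/5:ℝ) (1/2), |deriv (Hh η) r| ≤ MH := fun r hr =>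
    le_trans (by simpa using hB1 r hr) (le_trans (le_max_right _ _) (le_max_left _ _))
  have hMH2 : ∀ r ∈ Set.Icc (1/5:ℝ) (1/2), |deriv (deriv (Hh η)) r| ≤ MH := fun r hr =>
    le_trans (by simpa using hB2 r hr) (le_trans (le_max_left _ _) (le_max_right _ _))
  set CI := 2*(A + 2*M1) + 4*(A + 2*M1 + M2) with hCI
  set CII := (MH*Aφ + 5*MH*(Aφ+M1)) + (MH*Aφ + 10*MH*(Aφ+M1) + 25*MH*(Aφ+M1+M2)) with hCII
  have hCIn : 0 ≤ CI := by positivity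
  have hCIIn : 0 ≤ CII := by positivity
  clear_value A Aφ MH CI CII
  refine ⟨max CI CII, le_trans hCIn (le_max_left _ _), ?_⟩
  intro t ht ht2 r hr
  rcases lt_or_ge r (1/5 : ℝ) with hreg | hreg
  · -- regime I
    set s := -Real.log r with hsdef
    have hs5 : Real.log 5 ≤ s := by
      rw [hsdef, le_neg]
      calc Real.log r ≤ Real.log (1/5) := Real.log_le_log hr hreg.le
        _ = -Real.log 5 := by rw [one_div, Real.log_inv]
    have hs2 : Real.log 2 ≤ s := le_trans (Real.log_le_log (by norm_num) (by norm_num)) hs5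
    have hs0 : 0 < s := lt_of_lt_of_le ha hs2
    have hr14 : r < 1/4 := by linarith
    have hdGr : dG φ η t r = F1 φ t r := by
      simp [dG, Hh_eq_one hη1 hr14, dHh_eq_zero' hη1 hr14]
    have hddGr : ddG φ η t r = F2 φ t r := by
      simp [ddG, Hh_eq_one hη1 hr14, dHh_eq_zero' hη1 hr14, ddHh_eq_zero' hη1 hr14]
    set e := r ^ t with he
    have hrt : e = Real.exp (-(t*s)) := by
      rw [he, Real.rpow_def_of_pos hr, hsdef]
      ring_nf
    have he0 : 0 < e := by rw [hrt]; exact Real.exp_pos _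
    have he1 : e ≤ 1 := by
      rw [hrt, Real.exp_le_one_iff]
      nlinarith
    have hk1 : e * (t*s) ≤ 1 := by
      rw [hrt]
      have h := Real.add_one_le_exp (t*s)
      have hp : 0 < Real.exp (t*s) := Real.exp_pos _
      rw [Real.exp_neg]
      rw [inv_mul_le_iff₀ hp]
      nlinarith
    have hre : r * r ^ (t-1) = e := by
      rw [he, Real.rpow_sub hr, Real.rpow_one]; field_simp
    have hre2 : r^2 * r ^ (t-2) = e := by
      rw [he, Real.rpow_sub hr]
      rw [show (2:ℝ) = ((2:ℕ):ℝ) by norm_num, Real.rpow_natCast]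
      field_simp
    set P := |φ s| with hP
    set D1 := |deriv φ s| with hD1
    set D2 := |deriv (deriv φ) s| with hD2
    have hPn : 0 ≤ P := abs_nonneg _
    have hD1n : 0 ≤ D1 := abs_nonneg _
    have hD2n : 0 ≤ D2 := abs_nonneg _
    have hPb : P ≤ A + M1 * s := hgrow s hs2
    have hD1b : D1 ≤ M1 := hM1 s hs2
    have hD2b : D2 ≤ M2 := hM2 s hs2
    have habs1 : |F1 φ t r| ≤ r ^ (t-1) * (t * P + D1) := by
      simp only [F1, ← hsdef]
      rw [abs_mul, abs_of_nonneg (Real.rpow_nonneg hr.le _)]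
      gcongr
      calc |t * φ s - deriv φ s| ≤ |t * φ s| + |deriv φ s| := abs_sub _ _
        _ = t * P + D1 := by rw [abs_mul, abs_of_pos ht]
    have habs2 : |F2 φ t r| ≤ r ^ (t-2) * (t * P + D1 + D2) := by
      simp only [F2, ← hsdef]
      rw [abs_mul, abs_of_nonneg (Real.rpow_nonneg hr.le _)]
      gcongr
      have e1 : |t*(t-1) * φ s| ≤ t * P := by
        rw [abs_mul]
        have : |t*(t-1)| ≤ t := by
          rw [abs_mul, abs_of_pos ht]
          have h8 : |t-1| ≤ 1 := abs_le.mpr ⟨by linarith, by linarith⟩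
          nlinarith [abs_nonneg (t-1)]
        nlinarith [abs_nonneg (φ s), abs_nonneg (t*(t-1))]
      have e2 : |(2*t-1) * deriv φ s| ≤ D1 := by
        rw [abs_mul]
        have : |2*t-1| ≤ 1 := abs_le.mpr ⟨by linarith, by linarith⟩
        nlinarith [abs_nonneg (deriv φ s), abs_nonneg (2*t-1)]
      calc |t*(t-1) * φ s - (2*t-1) * deriv φ s + deriv (deriv φ) s|
          ≤ |t*(t-1) * φ s - (2*t-1) * deriv φ s| + D2 := abs_add_le _ _
        _ ≤ |t*(t-1) * φ s| + |(2*t-1) * deriv φ s| + D2 := by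
            linarith [abs_sub (t*(t-1) * φ s) ((2*t-1) * deriv φ s)]
        _ ≤ t * P + D1 + D2 := by linarith
    clear_value P D1 D2
    have het1 : e * t ≤ 1 := by nlinarith
    have hetP : e * (t * P) ≤ A + M1 := by
      have h1 : e * (t * P) ≤ e * (t * (A + M1 * s)) := by
        gcongr
      have h2 : e * (t * A) ≤ A := by
        calc e * (t * A) = (e * t) * A := by ring
          _ ≤ 1 * A := mul_le_mul_of_nonneg_right het1 hAn
          _ = A := one_mul A
      have h3 : e * (t * (M1 * s)) ≤ M1 := by
        calc e * (t * (M1 * s)) = M1 * (e * (t * s)) := by ring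
          _ ≤ M1 * 1 := mul_le_mul_of_nonneg_left hk1 hM1n
          _ = M1 := mul_one M1
      have hsplit : e * (t * (A + M1*s)) = e * (t * A) + e * (t * (M1 * s)) := by ring
      linarith
    have heD1 : e * D1 ≤ M1 := by nlinarith
    have heD2 : e * D2 ≤ M2 := by nlinarith
    have main1 : 2*r*|F1 φ t r| ≤ 2*(A + 2*M1) := by
      have step : 2*r*|F1 φ t r| ≤ 2*r * (r ^ (t-1) * (t * P + D1)) :=
        mul_le_mul_of_nonneg_left habs1 (by linarith)
      rw [show 2*r * (r ^ (t-1) * (t * P + D1)) = 2*((r * r^(t-1)) * (t*P+D1)) by ring,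
        hre] at step
      have hsplit : e * (t*P+D1) = e*(t*P) + e*D1 := by ring
      linarith
    have main2 : 4*r^2*|F2 φ t r| ≤ 4*(A + 2*M1 + M2) := by
      have hr2 : (0:ℝ) ≤ 4*r^2 := by positivity
      have step : 4*r^2*|F2 φ t r| ≤ 4*r^2 * (r ^ (t-2) * (t * P + D1 + D2)) :=
        mul_le_mul_of_nonneg_left habs2 hr2
      rw [show 4*r^2 * (r ^ (t-2) * (t*P+D1+D2)) = 4*((r^2 * r^(t-2)) * (t*P+D1+D2)) by ring,
        hre2] at step
      have hsplit : e * (t*P+D1+D2) = e*(t*P) + e*D1 + e*D2 := by ring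
      linarith
    rw [hdGr, hddGr]
    calc 2*r*|F1 φ t r| + 4*r^2*|F2 φ t r| ≤ CI := by rw [hCI]; linarith
      _ ≤ max CI CII := le_max_left _ _
  rcases lt_or_ge r (1/2 : ℝ) with hreg2 | hreg2
  · -- regime II
    set s := -Real.log r with hsdef
    have hs2 : Real.log 2 ≤ s := by
      rw [hsdef, le_neg]
      calc Real.log r ≤ Real.log (1/2) := Real.log_le_log hr hreg2.le
        _ = -Real.log 2 := by rw [one_div, Real.log_inv]
    have hs5 : s ≤ Real.log 5 := by
      rw [hsdef, neg_le]
      calc -Real.log 5 = Real.log (1/5) := by rw [one_div, Real.log_inv]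
        _ ≤ Real.log r := Real.log_le_log (by norm_num) hreg
    have hs0 : 0 < s := lt_of_lt_of_le ha hs2
    have hmem : r ∈ Set.Icc (1/5:ℝ) (1/2) := ⟨hreg, hreg2.le⟩
    have hPb : |φ s| ≤ Aφ := by
      have hg := hgrow s hs2
      have : M1 * s ≤ M1 * Real.log 5 := mul_le_mul_of_nonneg_left hs5 hM1n
      rw [hAφ]; linarith
    have hD1b : |deriv φ s| ≤ M1 := hM1 s hs2
    have hD2b : |deriv (deriv φ) s| ≤ M2 := hM2 s hs2
    have hr1 : r ≤ 1 := by linarith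
    have hq1 : r ^ t ≤ 1 := Real.rpow_le_one hr.le hr1 ht.le
    have hq1' : (0:ℝ) ≤ r ^ t := Real.rpow_nonneg hr.le _
    have hq5 : r ^ (t-1) ≤ 5 := by
      calc r ^ (t-1) ≤ r ^ (-1:ℝ) := Real.rpow_le_rpow_of_exponent_ge hr hr1 (by linarith)
        _ = r⁻¹ := Real.rpow_neg_one r
        _ ≤ 5 := by rw [inv_le_comm₀ (by linarith) (by norm_num)]; linarith
    have hq5' : (0:ℝ) ≤ r ^ (t-1) := Real.rpow_nonneg hr.le _
    have hq25 : r ^ (t-2) ≤ 25 := by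
      calc r ^ (t-2) ≤ r ^ (-2:ℝ) := Real.rpow_le_rpow_of_exponent_ge hr hr1 (by linarith)
        _ = (r^2)⁻¹ := by
            rw [show (-2:ℝ) = -((2:ℕ):ℝ) by norm_num, Real.rpow_neg hr.le, Real.rpow_natCast]
        _ ≤ 25 := by rw [inv_le_comm₀ (by positivity) (by norm_num)]; nlinarith
    have hq25' : (0:ℝ) ≤ r ^ (t-2) := Real.rpow_nonneg hr.le _
    have hW : |Wf φ t r| ≤ Aφ := by
      simp only [Wf, ← hsdef]
      rw [abs_mul, abs_of_nonneg hq1']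
      nlinarith [abs_nonneg (φ s)]
    have hF1 : |F1 φ t r| ≤ 5*(Aφ + M1) := by
      simp only [F1, ← hsdef]
      rw [abs_mul, abs_of_nonneg hq5']
      have : |t * φ s - deriv φ s| ≤ Aφ + M1 := by
        calc |t * φ s - deriv φ s| ≤ |t * φ s| + |deriv φ s| := abs_sub _ _
          _ ≤ Aφ + M1 := by
              rw [abs_mul, abs_of_pos ht]
              nlinarith [abs_nonneg (φ s)]
      nlinarith [abs_nonneg (t * φ s - deriv φ s)]
    have hF2 : |F2 φ t r| ≤ 25*(Aφ + M1 + M2) := by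
      simp only [F2, ← hsdef]
      rw [abs_mul, abs_of_nonneg hq25']
      have : |t*(t-1) * φ s - (2*t-1) * deriv φ s + deriv (deriv φ) s| ≤ Aφ + M1 + M2 := by
        have e1 : |t*(t-1) * φ s| ≤ Aφ := by
          rw [abs_mul]
          have h9 : |t*(t-1)| ≤ 1 := by
            rw [abs_mul, abs_of_pos ht]
            have h8 : |t-1| ≤ 1 := abs_le.mpr ⟨by linarith, by linarith⟩
            nlinarith [abs_nonneg (t-1)]
          nlinarith [abs_nonneg (φ s), abs_nonneg (t*(t-1))]
        have e2 : |(2*t-1) * deriv φ s| ≤ M1 := by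
          rw [abs_mul]
          have h9 : |2*t-1| ≤ 1 := abs_le.mpr ⟨by linarith, by linarith⟩
          nlinarith [abs_nonneg (deriv φ s), abs_nonneg (2*t-1)]
        calc |t*(t-1) * φ s - (2*t-1) * deriv φ s + deriv (deriv φ) s|
            ≤ |t*(t-1) * φ s - (2*t-1) * deriv φ s| + |deriv (deriv φ) s| := abs_add_le _ _
          _ ≤ |t*(t-1) * φ s| + |(2*t-1) * deriv φ s| + |deriv (deriv φ) s| := by
              linarith [abs_sub (t*(t-1) * φ s) ((2*t-1) * deriv φ s)]
          _ ≤ Aφ + M1 + M2 := by linarith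
      nlinarith [abs_nonneg (t*(t-1) * φ s - (2*t-1) * deriv φ s + deriv (deriv φ) s)]
    have hdGb : |dG φ η t r| ≤ MH*Aφ + 5*MH*(Aφ+M1) := by
      simp only [dG]
      calc |deriv (Hh η) r * Wf φ t r + Hh η r * F1 φ t r|
          ≤ |deriv (Hh η) r * Wf φ t r| + |Hh η r * F1 φ t r| := abs_add_le _ _
        _ = |deriv (Hh η) r| * |Wf φ t r| + |Hh η r| * |F1 φ t r| := by rw [abs_mul, abs_mul]
        _ ≤ MH*Aφ + 5*MH*(Aφ+M1) := by
            have g1 := hMH1 r hmem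
            have g2 := hMH0 r hmem
            nlinarith [abs_nonneg (deriv (Hh η) r), abs_nonneg (Hh η r),
              abs_nonneg (Wf φ t r), abs_nonneg (F1 φ t r)]
    have hddGb : |ddG φ η t r| ≤ MH*Aφ + 10*MH*(Aφ+M1) + 25*MH*(Aφ+M1+M2) := by
      simp only [ddG]
      calc |deriv (deriv (Hh η)) r * Wf φ t r + 2 * deriv (Hh η) r * F1 φ t r
            + Hh η r * F2 φ t r|
          ≤ |deriv (deriv (Hh η)) r * Wf φ t r| + |2 * deriv (Hh η) r * F1 φ t r|
            + |Hh η r * F2 φ t r| := by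
              refine le_trans (abs_add_le _ _) ?_
              linarith [abs_add_le (deriv (deriv (Hh η)) r * Wf φ t r)
                (2 * deriv (Hh η) r * F1 φ t r)]
        _ ≤ MH*Aφ + 10*MH*(Aφ+M1) + 25*MH*(Aφ+M1+M2) := by
            rw [abs_mul, abs_mul, abs_mul, abs_mul]
            have g0 := hMH0 r hmem
            have g1 := hMH1 r hmem
            have g2 := hMH2 r hmem
            have : |(2:ℝ)| = 2 := by norm_num
            rw [this]
            nlinarith [abs_nonneg (deriv (deriv (Hh η)) r), abs_nonneg (deriv (Hh η) r),
              abs_nonneg (Hh η r), abs_nonneg (Wf φ t r), abs_nonneg (F1 φ t r),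
              abs_nonneg (F2 φ t r)]
    have h2r : 2*r ≤ 1 := by linarith
    have h4r2 : 4*r^2 ≤ 1 := by nlinarith
    calc 2*r*|dG φ η t r| + 4*r^2*|ddG φ η t r|
        ≤ 1*|dG φ η t r| + 1*|ddG φ η t r| := by
          have u1 := mul_le_mul_of_nonneg_right h2r (abs_nonneg (dG φ η t r))
          have u2 := mul_le_mul_of_nonneg_right h4r2 (abs_nonneg (ddG φ η t r))
          linarith
      _ ≤ CII := by rw [hCII]; linarith
      _ ≤ max CI CII := le_max_right _ _
  · -- r ≥ 1/2 : everything vanishes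
    have h49 : (4:ℝ)/9 < r := by linarith
    have hz1 : dG φ η t r = 0 := by
      simp [dG, Hh_eq_zero hη0 h49, dHh_eq_zero hη0 h49]
    have hz2 : ddG φ η t r = 0 := by
      simp [ddG, Hh_eq_zero hη0 h49, dHh_eq_zero hη0 h49, ddHh_eq_zero hη0 h49]
    rw [hz1, hz2]
    simp only [abs_zero, mul_zero, add_zero]
    exact le_trans hCIn (le_max_left _ _)

end Key

section MV
variable {n : ℕ}

noncomputable def QF (n : ℕ) : EuclideanSpace ℝ (Fin n) → ℝ := fun z => ∑ i, z i ^ 2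

lemma QF_eq (z : EuclideanSpace ℝ (Fin n)) : QF n z = ‖z‖^2 := by
  rw [EuclideanSpace.norm_eq, Real.sq_sqrt (by positivity)]
  simp [QF, Real.norm_eq_abs, sq_abs]

lemma QF_pos {z : EuclideanSpace ℝ (Fin n)} (hz : z ≠ 0) : 0 < QF n z := by
  rw [QF_eq]
  have : 0 < ‖z‖ := norm_pos_iff.mpr hz
  positivity

lemma QF_hasFDeriv (z : EuclideanSpace ℝ (Fin n)) :
    HasFDerivAt (QF n)
      (∑ i, (2 * z i) • (EuclideanSpace.proj i : EuclideanSpace ℝ (Fin n) →L[ℝ] ℝ)) z := by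
  have h : ∀ i ∈ Finset.univ, HasFDerivAt (fun y : EuclideanSpace ℝ (Fin n) => y i ^ 2)
      ((2 * z i) • (EuclideanSpace.proj i : EuclideanSpace ℝ (Fin n) →L[ℝ] ℝ)) z := by
    intro i _
    have hp : HasFDerivAt (fun y : EuclideanSpace ℝ (Fin n) => y i)
        (EuclideanSpace.proj i : EuclideanSpace ℝ (Fin n) →L[ℝ] ℝ) z :=
      (EuclideanSpace.proj i : EuclideanSpace ℝ (Fin n) →L[ℝ] ℝ).hasFDerivAt
    have : HasFDerivAt (fun y : EuclideanSpace ℝ (Fin n) => y i * y i) _ z := hp.mul hp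
    have e : (fun y : EuclideanSpace ℝ (Fin n) => y i ^ 2) = fun y => y i * y i := by
      funext y; ring
    rw [e, two_mul, add_smul]; exact this
  have := HasFDerivAt.fun_sum h
  exact this

lemma DQ_apply (z : EuclideanSpace ℝ (Fin n)) (k : Fin n) :
    (∑ i, (2 * z i) • (EuclideanSpace.proj i : EuclideanSpace ℝ (Fin n) →L[ℝ] ℝ))
      (EuclideanSpace.single k 1) = 2 * z k := by
  rw [ContinuousLinearMap.sum_apply]
  simp only [ContinuousLinearMap.smul_apply, PiLp.proj_apply,
    EuclideanSpace.single_apply, smul_eq_mul, mul_ite, mul_one, mul_zero]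
  rw [Finset.sum_ite_eq' Finset.univ k (fun i => 2 * z i)]
  simp

lemma coord_sq_le (x : EuclideanSpace ℝ (Fin n)) (i : Fin n) : x i ^ 2 ≤ QF n x :=
  Finset.single_le_sum (f := fun i => x i ^ 2) (fun _ _ => sq_nonneg _) (Finset.mem_univ i)

end MV

set_option maxHeartbeats 1000000 in
open scoped Classical in
theorem stmt12 (n : ℕ) (hn : 2 ≤ n) (φ η : ℝ → ℝ)
    (hφ : ContDiffOn ℝ 2 φ (Set.Ioi 0))
    (h1 : Tendsto φ atTop atTop)
    (h2 : Tendsto (deriv φ) atTop (𝓝 0))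
    (h3 : Tendsto (deriv (deriv φ)) atTop (𝓝 0))
    (hη : ContDiff ℝ (⊤ : ℕ∞) η) (hηmono : AntitoneOn η (Set.Ici 0))
    (hηrange : ∀ s ∈ Set.Ici (0:ℝ), η s ∈ Set.Icc (0:ℝ) 1)
    (hη1 : ∀ s ∈ Set.Icc (0:ℝ) (1/2), η s = 1)
    (hη0 : ∀ s : ℝ, 2/3 ≤ s → η s = 0) :
    ∃ C : ℝ, ∀ t : ℝ, 0 < t → t ≤ 1/2 → ∀ j : Fin n, 2 ≤ (j : ℕ) →
      ∀ x : EuclideanSpace ℝ (Fin n),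
        |spd ⟨0, by omega⟩ j
          (fun y : EuclideanSpace ℝ (Fin n) => if y = 0 then 0
          else η ‖y‖ * (y ⟨0, by omega⟩) * (y ⟨1, by omega⟩) * ‖y‖ ^ (2*t) * φ (-Real.log (‖y‖^2))) x| ≤ C := by
  obtain ⟨C, hC0, hC⟩ := keybound hφ h2 h3 hη hη1 hη0
  refine ⟨C, ?_⟩
  intro t ht ht2 j hj x
  have hn0 : 0 < n := by omega
  have hn1 : 1 < n := by omega
  set i0 : Fin n := ⟨0, by omega⟩ with hi0
  set i1 : Fin n := ⟨1, by omega⟩ with hi1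
  have hji0 : ¬(i0 = j) := by
    intro h
    have := congrArg Fin.val h
    simp [hi0] at this
    omega
  have hji1 : ¬(i1 = j) := by
    intro h
    have := congrArg Fin.val h
    simp [hi1] at this
    omega
  have hji0' : ¬(j = i0) := fun h => hji0 h.symm
  have hji1' : ¬(j = i1) := fun h => hji1 h.symm
  have hi01 : ¬(i1 = i0) := by
    intro h
    have := congrArg Fin.val h
    simp [hi0, hi1] at this
  -- rewrite f
  have hfeq : (fun y : EuclideanSpace ℝ (Fin n) => if y = 0 then 0
      else η ‖y‖ * (y i0) * (y i1) * ‖y‖ ^ (2*t) * φ (-Real.log (‖y‖^2)))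
      = fun y => y i0 * y i1 * Gg φ η t (QF n y) := by
    funext y
    by_cases hy : y = 0
    · subst hy
      simp
    · rw [if_neg hy]
      have hny : 0 < ‖y‖ := norm_pos_iff.mpr hy
      rw [QF_eq]
      simp only [Gg, Hh, Wf]
      rw [Real.sqrt_sq (norm_nonneg y)]
      rw [show ((‖y‖^2 : ℝ) ^ t) = ‖y‖ ^ (2*t) by
        rw [← Real.rpow_natCast ‖y‖ 2, ← Real.rpow_mul (norm_nonneg y)]
        norm_num]
      ring
  rw [hfeq]
  -- first derivative formula
  have hpd : ∀ z : EuclideanSpace ℝ (Fin n), z ≠ 0 →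
      pd j (fun y => y i0 * y i1 * Gg φ η t (QF n y)) z
        = 2 * z i0 * z i1 * z j * dG φ η t (QF n z) := by
    intro z hz
    have hq : 0 < QF n z := QF_pos hz
    have hp0 : HasFDerivAt (fun y : EuclideanSpace ℝ (Fin n) => y i0)
        (EuclideanSpace.proj i0 : EuclideanSpace ℝ (Fin n) →L[ℝ] ℝ) z :=
      (EuclideanSpace.proj i0 : EuclideanSpace ℝ (Fin n) →L[ℝ] ℝ).hasFDerivAt
    have hp1 : HasFDerivAt (fun y : EuclideanSpace ℝ (Fin n) => y i1)
        (EuclideanSpace.proj i1 : EuclideanSpace ℝ (Fin n) →L[ℝ] ℝ) z :=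
      (EuclideanSpace.proj i1 : EuclideanSpace ℝ (Fin n) →L[ℝ] ℝ).hasFDerivAt
    have hGQ : HasFDerivAt (fun y : EuclideanSpace ℝ (Fin n) => Gg φ η t (QF n y))
        ((dG φ η t (QF n z)) •
          (∑ i, (2 * z i) • (EuclideanSpace.proj i : EuclideanSpace ℝ (Fin n) →L[ℝ] ℝ))) z := by
      exact (Gg_hasDeriv hφ hη hη0 hq).comp_hasFDerivAt z (QF_hasFDeriv z)
    have hfd : HasFDerivAt (fun y : EuclideanSpace ℝ (Fin n) => y i0 * y i1 * Gg φ η t (QF n y))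
        ((z i0 * z i1) • ((dG φ η t (QF n z)) •
            (∑ i, (2 * z i) • (EuclideanSpace.proj i : EuclideanSpace ℝ (Fin n) →L[ℝ] ℝ)))
          + (Gg φ η t (QF n z)) •
            ((z i0) • (EuclideanSpace.proj i1 : EuclideanSpace ℝ (Fin n) →L[ℝ] ℝ)
              + (z i1) • (EuclideanSpace.proj i0 : EuclideanSpace ℝ (Fin n) →L[ℝ] ℝ))) z := by
      exact (hp0.mul hp1).mul hGQ
    simp only [pd]
    rw [hfd.fderiv]
    simp only [ContinuousLinearMap.add_apply, ContinuousLinearMap.smul_apply, DQ_apply,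
      PiLp.proj_apply, EuclideanSpace.single_apply, if_neg hji0, if_neg hji1,
      if_neg hji0', if_neg hji1', smul_eq_mul]
    ring
  -- main case split
  by_cases hx : x = 0
  · subst hx
    by_cases hdiff : DifferentiableAt ℝ
        (pd j (fun y => y i0 * y i1 * Gg φ η t (QF n y))) 0
    · set g := pd j (fun y : EuclideanSpace ℝ (Fin n) => y i0 * y i1 * Gg φ η t (QF n y))
        with hgdef
      have hline : ∀ h : ℝ, h ≠ 0 → g (h • EuclideanSpace.single i0 (1:ℝ)) = 0 := by
        intro h hh
        have hz : (h • EuclideanSpace.single i0 (1:ℝ)) ≠ 0 := by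
          intro hc
          have : (h • EuclideanSpace.single i0 (1:ℝ)) i0 = 0 := by rw [hc]; rfl
          simp [EuclideanSpace.single_apply, hh] at this
        rw [hpd _ hz]
        have : (h • EuclideanSpace.single i0 (1:ℝ)) i1 = 0 := by
          simp [EuclideanSpace.single_apply, if_neg hi01]
        rw [this]
        ring
      have hg0 : g 0 = 0 := by
        have hcont : ContinuousAt g 0 := hdiff.continuousAt
        have hsm : Tendsto (fun h : ℝ => h • EuclideanSpace.single i0 (1:ℝ))
            (𝓝[≠] (0:ℝ)) (𝓝 (0 : EuclideanSpace ℝ (Fin n))) := by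
          have : Tendsto (fun h : ℝ => h • EuclideanSpace.single i0 (1:ℝ))
              (𝓝 (0:ℝ)) (𝓝 ((0:ℝ) • EuclideanSpace.single i0 (1:ℝ))) :=
            (continuous_id.smul continuous_const).tendsto 0
          rw [zero_smul] at this
          exact this.mono_left nhdsWithin_le_nhds
        have hpath : Tendsto (fun h : ℝ => g (h • EuclideanSpace.single i0 (1:ℝ)))
            (𝓝[≠] (0:ℝ)) (𝓝 (g 0)) := (hcont.tendsto).comp hsm
        have hzero : Tendsto (fun h : ℝ => g (h • EuclideanSpace.single i0 (1:ℝ)))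
            (𝓝[≠] (0:ℝ)) (𝓝 0) := by
          apply Tendsto.congr' _ tendsto_const_nhds
          filter_upwards [self_mem_nhdsWithin] with h hh
          exact (hline h hh).symm
        exact tendsto_nhds_unique hpath hzero
      have hallzero : (fun h : ℝ => g (h • EuclideanSpace.single i0 (1:ℝ))) = fun _ => 0 := by
        funext h
        by_cases hh : h = 0
        · subst hh; rw [zero_smul]; exact hg0
        · exact hline h hh
      have hc : HasDerivAt (fun h : ℝ => h • EuclideanSpace.single i0 (1:ℝ))
          (EuclideanSpace.single i0 (1:ℝ)) 0 := by
        simpa using (hasDerivAt_id (0:ℝ)).smul_const (EuclideanSpace.single i0 (1:ℝ))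
      have hgF : HasFDerivAt g (fderiv ℝ g 0)
          ((fun h : ℝ => h • EuclideanSpace.single i0 (1:ℝ)) 0) := by
        rw [show ((fun h : ℝ => h • EuclideanSpace.single i0 (1:ℝ)) 0) = 0 by simp]
        exact hdiff.hasFDerivAt
      have hcomp : HasDerivAt (fun h : ℝ => g (h • EuclideanSpace.single i0 (1:ℝ)))
          (fderiv ℝ g 0 (EuclideanSpace.single i0 (1:ℝ))) 0 := by
        exact hgF.comp_hasDerivAt 0 hc
      rw [hallzero] at hcomp
      have : fderiv ℝ g 0 (EuclideanSpace.single i0 (1:ℝ)) = 0 :=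
        hcomp.unique (hasDerivAt_const 0 0)
      have hfin : spd i0 j (fun y : EuclideanSpace ℝ (Fin n) =>
          y i0 * y i1 * Gg φ η t (QF n y)) 0 = 0 := by
        show fderiv ℝ g 0 (EuclideanSpace.single i0 1) = 0
        exact this
      rw [hfin]
      simpa using hC0
    · have hfin : spd i0 j (fun y : EuclideanSpace ℝ (Fin n) =>
          y i0 * y i1 * Gg φ η t (QF n y)) 0 = 0 := by
        simp only [spd, pd]
        rw [fderiv_zero_of_not_differentiableAt hdiff]
        simp
      rw [hfin]
      simpa using hC0
  · -- x ≠ 0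
    have hq : 0 < QF n x := QF_pos hx
    have hp0 : HasFDerivAt (fun y : EuclideanSpace ℝ (Fin n) => y i0)
        (EuclideanSpace.proj i0 : EuclideanSpace ℝ (Fin n) →L[ℝ] ℝ) x :=
      (EuclideanSpace.proj i0 : EuclideanSpace ℝ (Fin n) →L[ℝ] ℝ).hasFDerivAt
    have hp1 : HasFDerivAt (fun y : EuclideanSpace ℝ (Fin n) => y i1)
        (EuclideanSpace.proj i1 : EuclideanSpace ℝ (Fin n) →L[ℝ] ℝ) x :=
      (EuclideanSpace.proj i1 : EuclideanSpace ℝ (Fin n) →L[ℝ] ℝ).hasFDerivAt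
    have hpj : HasFDerivAt (fun y : EuclideanSpace ℝ (Fin n) => y j)
        (EuclideanSpace.proj j : EuclideanSpace ℝ (Fin n) →L[ℝ] ℝ) x :=
      (EuclideanSpace.proj j : EuclideanSpace ℝ (Fin n) →L[ℝ] ℝ).hasFDerivAt
    have hdGQ : HasFDerivAt (fun z : EuclideanSpace ℝ (Fin n) => dG φ η t (QF n z))
        ((ddG φ η t (QF n x)) •
          (∑ i, (2 * x i) • (EuclideanSpace.proj i : EuclideanSpace ℝ (Fin n) →L[ℝ] ℝ))) x := by
      exact (dG_hasDeriv hφ hη hη0 hq).comp_hasFDerivAt x (QF_hasFDeriv x)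
    have h2z0 : HasFDerivAt (fun z : EuclideanSpace ℝ (Fin n) => 2 * z i0)
        ((2:ℝ) • (EuclideanSpace.proj i0 : EuclideanSpace ℝ (Fin n) →L[ℝ] ℝ)) x :=
      hp0.const_mul 2
    have hprod : HasFDerivAt (fun z : EuclideanSpace ℝ (Fin n) =>
          2 * z i0 * z i1 * z j * dG φ η t (QF n z)) _ x := ((h2z0.mul hp1).mul hpj).mul hdGQ
    have hev : pd j (fun y : EuclideanSpace ℝ (Fin n) => y i0 * y i1 * Gg φ η t (QF n y))
        =ᶠ[𝓝 x] (fun z => 2 * z i0 * z i1 * z j * dG φ η t (QF n z)) := by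
      filter_upwards [IsOpen.mem_nhds isOpen_compl_singleton hx] with z hz
      exact hpd z hz
    have hspd : spd i0 j (fun y : EuclideanSpace ℝ (Fin n) =>
        y i0 * y i1 * Gg φ η t (QF n y)) x
        = 2 * x i1 * x j * dG φ η t (QF n x)
          + 4 * (x i0 * x i0) * (x i1 * x j) * ddG φ η t (QF n x) := by
      simp only [spd, pd]
      rw [hev.fderiv_eq, hprod.fderiv]
      simp only [ContinuousLinearMap.add_apply, ContinuousLinearMap.smul_apply, DQ_apply,
        PiLp.proj_apply, EuclideanSpace.single_apply, if_neg hji0, if_neg hji1, if_neg hi01,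
        if_neg hji0', if_neg hji1', smul_eq_mul, if_pos rfl, if_true, Pi.mul_apply]
      ring
    rw [hspd]
    -- bounds
    set q := QF n x with hqdef
    have hb2 : x i0 * x i0 ≤ q := by
      have := coord_sq_le x i0
      nlinarith [sq_nonneg (x i0)]
    have hb1 : |x i1 * x j| ≤ q := by
      have h1 : |x i1| ≤ Real.sqrt q := by
        rw [show |x i1| = Real.sqrt ((x i1)^2) by rw [Real.sqrt_sq_eq_abs]]
        exact Real.sqrt_le_sqrt (coord_sq_le x i1)
      have h2 : |x j| ≤ Real.sqrt q := by
        rw [show |x j| = Real.sqrt ((x j)^2) by rw [Real.sqrt_sq_eq_abs]]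
        exact Real.sqrt_le_sqrt (coord_sq_le x j)
      calc |x i1 * x j| = |x i1| * |x j| := abs_mul _ _
        _ ≤ Real.sqrt q * Real.sqrt q := by
            apply mul_le_mul h1 h2 (abs_nonneg _) (Real.sqrt_nonneg _)
        _ = q := Real.mul_self_sqrt hq.le
    have hkey := hC t ht ht2 q hq
    have e1 : |2 * x i1 * x j * dG φ η t q| ≤ 2*q*|dG φ η t q| := by
      rw [show (2:ℝ) * x i1 * x j * dG φ η t q = (2 * (x i1 * x j)) * dG φ η t q by ring,
        abs_mul, abs_mul]
      rw [show |(2:ℝ)| = 2 by norm_num]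
      have := mul_le_mul_of_nonneg_right
        (mul_le_mul_of_nonneg_left hb1 (by norm_num : (0:ℝ) ≤ 2)) (abs_nonneg (dG φ η t q))
      linarith
    have e2 : |4 * (x i0 * x i0) * (x i1 * x j) * ddG φ η t q| ≤ 4*q^2*|ddG φ η t q| := by
      rw [abs_mul, abs_mul, abs_mul]
      rw [show |(4:ℝ)| = 4 by norm_num]
      have hxx : |x i0 * x i0| = x i0 * x i0 := abs_of_nonneg (mul_self_nonneg _)
      rw [hxx]
      have step1 : x i0 * x i0 * |x i1 * x j| ≤ q * q := by
        have := mul_le_mul hb2 hb1 (abs_nonneg _) hq.le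
        linarith
      have step2 : 4 * (x i0 * x i0) * |x i1 * x j| ≤ 4 * q^2 := by nlinarith
      have := mul_le_mul_of_nonneg_right step2 (abs_nonneg (ddG φ η t q))
      linarith
    calc |2 * x i1 * x j * dG φ η t q + 4 * (x i0 * x i0) * (x i1 * x j) * ddG φ η t q|
        ≤ |2 * x i1 * x j * dG φ η t q| + |4 * (x i0 * x i0) * (x i1 * x j) * ddG φ η t q| :=
          abs_add_le _ _
      _ ≤ 2*q*|dG φ η t q| + 4*q^2*|ddG φ η t q| := by linarith
      _ ≤ C := hkey
end

section
/- Let u: ℝⁿ → ℝ satisfy u(0) = 0 and suppose there are disjoint balls B_k (centered at points p_k with |p_k| = R_k·|ζ₀|, radius (2/3)r_k, with r_k < R_k and R_k → 0), positive numbers ε_k → 0, and a constant C such that u ≡ 0 outside the union of the balls, u vanishes on all coordinate hyperplanes, and |u(x)| ≤ ε_k r_k² C for x ∈ B_k. Then u is twice differentiable at the origin with all first and second order partial derivatives at 0 equal to zero; in particular |u(x)|/|x|² ≤ ε_k C / (R_k/r_k − 2/3)² → 0 along the balls. -/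
open Filter Topology Metric Set

theorem stmt16 (n : ℕ) (hn : 1 ≤ n) (u : EuclideanSpace ℝ (Fin n) → ℝ)
    (p : ℕ → EuclideanSpace ℝ (Fin n)) (R r ε : ℕ → ℝ) (C : ℝ) (hC : 0 ≤ C)
    (hu0 : u 0 = 0)
    (hr : ∀ k, 0 < r k ∧ r k < R k)
    (hp : ∀ k, ‖p k‖ = R k)
    (hR : Tendsto R atTop (𝓝 0))
    (hε : ∀ k, 0 < ε k)
    (hε0 : Tendsto ε atTop (𝓝 0))
    (hdisj : Pairwise (Function.onFun Disjoint fun k => Metric.closedBall (p k) ((2/3) * r k)))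
    (hout : ∀ x : EuclideanSpace ℝ (Fin n),
      (∀ k, x ∉ Metric.closedBall (p k) ((2/3) * r k)) → u x = 0)
    (hhyper : ∀ x : EuclideanSpace ℝ (Fin n), (∃ j : Fin n, x j = 0) → u x = 0)
    (hbd : ∀ k, ∀ x ∈ Metric.closedBall (p k) ((2/3) * r k), |u x| ≤ ε k * r k ^ 2 * C) :
    Tendsto (fun x : EuclideanSpace ℝ (Fin n) => u x / ‖x‖^2)
      (𝓝[≠] (0 : EuclideanSpace ℝ (Fin n))) (𝓝 0) ∧
    ∀ k, ∀ x ∈ Metric.closedBall (p k) ((2/3) * r k),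
      |u x| / ‖x‖^2 ≤ ε k * C / (R k / r k - 2/3)^2 := by
  have hkey : ∀ k, ∀ x ∈ Metric.closedBall (p k) ((2/3) * r k),
      |u x| / ‖x‖^2 ≤ ε k * C / (R k / r k - 2/3)^2 := by
    intro k x hx
    obtain ⟨hr0, hrR⟩ := hr k
    have hd : dist x (p k) ≤ (2/3) * r k := hx
    have hnorm : R k - (2/3) * r k ≤ ‖x‖ := by
      have h1 : ‖p k‖ - ‖x‖ ≤ ‖p k - x‖ := norm_sub_norm_le _ _
      rw [dist_eq_norm, ← norm_neg, neg_sub] at hd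
      rw [hp k] at h1
      linarith
    have hpos : 0 < R k - (2/3) * r k := by nlinarith
    have h1 : |u x| / ‖x‖^2 ≤ (ε k * r k ^ 2 * C) / (R k - (2/3) * r k)^2 := by
      apply div_le_div₀ (mul_nonneg (mul_nonneg (hε k).le (sq_nonneg _)) hC)
        (hbd k x hx) (by positivity)
      nlinarith [norm_nonneg x]
    have heq : (ε k * r k ^ 2 * C) / (R k - (2/3) * r k)^2
        = ε k * C / (R k / r k - 2/3)^2 := by
      have h2 : R k / r k - 2/3 = (R k - (2/3) * r k) / r k := by
        field_simp
      rw [h2, div_pow]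
      rw [div_eq_div_iff (by positivity) (by positivity)]
      field_simp
    linarith [h1, heq.le, heq.ge]
  constructor
  · rw [Metric.tendsto_nhds]
    intro δ hδ
    have h9 : Tendsto (fun k => 9 * (ε k * C)) atTop (𝓝 0) := by
      simpa using (hε0.mul_const C).const_mul 9
    have hev : ∀ᶠ k in atTop, 9 * (ε k * C) < δ := h9.eventually_lt_const hδ
    obtain ⟨K, hK⟩ := eventually_atTop.mp hev
    set S : Set (EuclideanSpace ℝ (Fin n)) :=
      ⋃ k ∈ Set.Iio K, Metric.closedBall (p k) ((2/3) * r k) with hS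
    have hSc : IsClosed S :=
      (Set.finite_Iio K).isClosed_biUnion (fun k _ => Metric.isClosed_closedBall)
    have h0S : (0 : EuclideanSpace ℝ (Fin n)) ∉ S := by
      simp only [hS, Set.mem_iUnion, Metric.mem_closedBall, not_exists]
      intro k _ hmem
      obtain ⟨hr0, hrR⟩ := hr k
      rw [dist_zero_left, hp k] at hmem
      nlinarith
    have hmemS : Sᶜ ∈ 𝓝 (0 : EuclideanSpace ℝ (Fin n)) :=
      hSc.isOpen_compl.mem_nhds h0S
    filter_upwards [eventually_nhdsWithin_of_eventually_nhds
      (eventually_of_mem hmemS (fun x hx => hx))] with x hxS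
    by_cases hball : ∃ k, x ∈ Metric.closedBall (p k) ((2/3) * r k)
    · obtain ⟨k, hk⟩ := hball
      have hkK : K ≤ k := by
        by_contra hlt
        exact hxS (Set.mem_biUnion (by simpa using Nat.lt_of_not_le hlt) hk)
      obtain ⟨hr0, hrR⟩ := hr k
      have hq : (1:ℝ)/3 < R k / r k - 2/3 := by
        have : (1:ℝ) < R k / r k := (one_lt_div hr0).mpr hrR
        linarith
      have hεC : 0 ≤ ε k * C := mul_nonneg (hε k).le hC
      have hbound : ε k * C / (R k / r k - 2/3)^2 ≤ 9 * (ε k * C) := by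
        rw [div_le_iff₀ (by positivity)]
        have hq2 : (1:ℝ)/9 < (R k / r k - 2/3)^2 := by nlinarith
        nlinarith [mul_le_mul_of_nonneg_left hq2.le hεC]
      have habs : dist (u x / ‖x‖^2) 0 = |u x| / ‖x‖^2 := by
        rw [dist_zero_right, norm_div]
        simp [abs_of_nonneg (sq_nonneg ‖x‖)]
      rw [habs]
      calc |u x| / ‖x‖^2 ≤ ε k * C / (R k / r k - 2/3)^2 := hkey k x hk
        _ ≤ 9 * (ε k * C) := hbound
        _ < δ := hK k hkK
    · push_neg at hball
      rw [hout x hball]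
      simpa using hδ
  · exact hkey
end
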